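/- arXiv:2604.16644 — 12 statements merged into one kernel-verified Lean document; each statement's English description precedes it below -/
import Mathlib

section
/- Let M > 0 and let (t, r, φ) be a twice-differentiable solution of the equatorial geodesic equations of Schwarzschild spacetime on an open real interval I, with r(τ) > 2M for all τ ∈ I. Then the 4-velocity norm function τ ↦ −((r−2M)/r)(t')² + (r/(r−2M))(r')² + r²(φ')² is constant on I. -/
noncomputable section

/-- The equatorial geodesic equations of Schwarzschild spacetime (mass `M`)
for twice-differentiable functions `t, r, φ : I → ℝ`, with auxiliary
first-derivative functions `t', r', φ'`, on a set `I`, with `r > 2M`. -/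
def SchwGeo (M : ℝ) (I : Set ℝ) (t t' r r' φ φ' : ℝ → ℝ) : Prop :=
  ∀ τ ∈ I,
    2 * M < r τ ∧
    HasDerivAt t (t' τ) τ ∧ HasDerivAt r (r' τ) τ ∧ HasDerivAt φ (φ' τ) τ ∧
    HasDerivAt t' (-(2 * M / (r τ * (r τ - 2 * M))) * t' τ * r' τ) τ ∧
    HasDerivAt r' (-(M * (r τ - 2 * M) / (r τ) ^ 3) * (t' τ) ^ 2
        + (M / (r τ * (r τ - 2 * M))) * (r' τ) ^ 2
        + (r τ - 2 * M) * (φ' τ) ^ 2) τ ∧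
    HasDerivAt φ' (-(2 / r τ) * r' τ * φ' τ) τ


/-- The 4-velocity norm `-((r-2M)/r)(t')² + (r/(r-2M))(r')² + r²(φ')²` is
constant along any solution of the equatorial geodesic equations of
Schwarzschild spacetime. -/
theorem norm_constant (M a b : ℝ) (hM : 0 < M)
    (t t' r r' φ φ' : ℝ → ℝ)
    (hgeo : SchwGeo M (Set.Ioo a b) t t' r r' φ φ') :
    ∀ τ₁ ∈ Set.Ioo a b, ∀ τ₂ ∈ Set.Ioo a b,
      -((r τ₁ - 2 * M) / r τ₁) * (t' τ₁) ^ 2 + (r τ₁ / (r τ₁ - 2 * M)) * (r' τ₁) ^ 2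
          + (r τ₁) ^ 2 * (φ' τ₁) ^ 2
      = -((r τ₂ - 2 * M) / r τ₂) * (t' τ₂) ^ 2 + (r τ₂ / (r τ₂ - 2 * M)) * (r' τ₂) ^ 2
          + (r τ₂) ^ 2 * (φ' τ₂) ^ 2 := by
  intro τ₁ h₁ τ₂ h₂
  set F : ℝ → ℝ := fun τ =>
    -((r τ - 2 * M) / r τ) * (t' τ) ^ 2 + (r τ / (r τ - 2 * M)) * (r' τ) ^ 2
      + (r τ) ^ 2 * (φ' τ) ^ 2 with hF
  have key : ∀ τ ∈ Set.Ioo a b, HasDerivAt F 0 τ := by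
    intro τ hτ
    obtain ⟨hr2M, ht, hr, hφ, ht', hr', hφ'⟩ := hgeo τ hτ
    have hr0 : r τ ≠ 0 := by nlinarith
    have hrm : r τ - 2 * M ≠ 0 := by linarith [hr2M]
    have H := ((((hr.sub_const (2 * M)).div hr hr0).neg.mul (ht'.pow 2)).add
        ((hr.div (hr.sub_const (2 * M)) hrm).mul (hr'.pow 2))).add
        ((hr.pow 2).mul (hφ'.pow 2))
    refine H.congr_deriv ?_
    simp only [Pi.pow_apply, Pi.neg_apply, Pi.div_apply]
    field_simp
    ring
  have hdiff : DifferentiableOn ℝ F (Set.Ioo a b) := fun x hx =>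
    (key x hx).differentiableAt.differentiableWithinAt
  exact (convex_Ioo a b).is_const_of_fderivWithin_eq_zero hdiff
    (fun x hx => by
      have := (key x hx).hasFDerivAt.hasFDerivWithinAt.fderivWithin (isOpen_Ioo.uniqueDiffWithinAt hx)
      rw [this]; ext; simp) h₁ h₂
end
end

section
/- Let M > 0 and let (t, r, φ) be a twice-differentiable unit-norm solution of the equatorial geodesic equations of Schwarzschild spacetime on an open real interval I with r(τ) > 2M, with constant energy E and constant angular momentum L, and assume r'(τ) > 0 for all τ ∈ I. Let r₀ > 2M be such that W(y) := E² − (1 − 2M/y)(1 + L²/y²) > 0 for every y in the closed interval with endpoints r₀ and r(τ), for every τ ∈ I. Then the LRL angle function τ ↦ φ(τ) − L ∫_{r₀}^{r(τ)} dy/(y² √W(y)) is constant on I. -/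
noncomputable section

/-- The effective radial potential function
`W(y) = E² - (1 - 2M/y)(1 + L²/y²)`, whose square root is the radial speed. -/
def Weff (M E L : ℝ) (y : ℝ) : ℝ :=
  E ^ 2 - (1 - 2 * M / y) * (1 + L ^ 2 / y ^ 2)

lemma weff_integrand_meas (M E L : ℝ) :
    Measurable (fun y => 1 / (y ^ 2 * Real.sqrt (Weff M E L y))) := by
  unfold Weff
  apply Measurable.div measurable_const
  exact ((measurable_id.pow_const 2).mul
    ((measurable_const.sub ((measurable_const.sub
      (measurable_const.div measurable_id)).mul (measurable_const.add
      (measurable_const.div (measurable_id.pow_const 2))))).sqrt))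

lemma norm_alg (R t' r' φ' M : ℝ) (hRne : R ≠ 0) (hRMne : R - 2 * M ≠ 0)
    (hn : -((R - 2 * M) / R) * t' ^ 2 + (R / (R - 2 * M)) * r' ^ 2 + R ^ 2 * φ' ^ 2 = -1) :
    ((1 - 2 * M / R) * t') ^ 2 - (1 - 2 * M / R) * (1 + (R ^ 2 * φ') ^ 2 / R ^ 2) = r' ^ 2 := by
  field_simp at hn ⊢
  ring_nf at hn ⊢
  linear_combination (-1) * hn

/-- The LRL angle `Φ = φ - L ∫_{r₀}^{r} dy/(y² √W(y))` is constant along any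
unit-norm solution of the equatorial geodesic equations with constant energy
`E`, constant angular momentum `L` and increasing radius. -/
theorem LRL_angle_conserved (M a b : ℝ) (hM : 0 < M)
    (t t' r r' φ φ' : ℝ → ℝ) (E L r₀ : ℝ)
    (hgeo : SchwGeo M (Set.Ioo a b) t t' r r' φ φ')
    (hnorm : ∀ τ ∈ Set.Ioo a b,
      -((r τ - 2 * M) / r τ) * (t' τ) ^ 2 + (r τ / (r τ - 2 * M)) * (r' τ) ^ 2
        + (r τ) ^ 2 * (φ' τ) ^ 2 = -1)
    (hE : ∀ τ ∈ Set.Ioo a b, (1 - 2 * M / r τ) * t' τ = E)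
    (hL : ∀ τ ∈ Set.Ioo a b, (r τ) ^ 2 * φ' τ = L)
    (hr' : ∀ τ ∈ Set.Ioo a b, 0 < r' τ)
    (hr₀ : 2 * M < r₀)
    (hW : ∀ τ ∈ Set.Ioo a b, ∀ y ∈ Set.uIcc r₀ (r τ), 0 < Weff M E L y) :
    ∀ τ₁ ∈ Set.Ioo a b, ∀ τ₂ ∈ Set.Ioo a b,
      φ τ₁ - L * ∫ y in r₀..r τ₁, 1 / (y ^ 2 * Real.sqrt (Weff M E L y))
      = φ τ₂ - L * ∫ y in r₀..r τ₂, 1 / (y ^ 2 * Real.sqrt (Weff M E L y)) := by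
  set f : ℝ → ℝ := fun y => 1 / (y ^ 2 * Real.sqrt (Weff M E L y)) with hf
  set F : ℝ → ℝ := fun τ => φ τ - L * ∫ y in r₀..r τ, f y with hF
  have key : ∀ τ ∈ Set.Ioo a b, HasDerivAt F 0 τ := by
    intro τ hτ
    obtain ⟨hr2M, htd, hrd, hφd, _, _, _⟩ := hgeo τ hτ
    have hRpos : 0 < r τ := by linarith
    have hRne : r τ ≠ 0 := ne_of_gt hRpos
    have hRMne : r τ - 2 * M ≠ 0 := by intro h; linarith [sub_eq_zero.mp h]
    have hyl : ∀ y ∈ Set.uIcc r₀ (r τ), 0 < y := by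
      intro y hy
      rcases Set.mem_uIcc.mp hy with ⟨h1, h2⟩ | ⟨h1, h2⟩ <;> linarith
    have hcont : ∀ y ∈ Set.uIcc r₀ (r τ), ContinuousAt f y := by
      intro y hy
      have hy0 : y ≠ 0 := ne_of_gt (hyl y hy)
      have hWy : 0 < Weff M E L y := hW τ hτ y hy
      have hWc : ContinuousAt (Weff M E L) y := by
        unfold Weff
        exact continuousAt_const.sub
          ((continuousAt_const.sub (continuousAt_const.div continuousAt_id hy0)).mul
            (continuousAt_const.add
              (continuousAt_const.div (continuousAt_id.pow 2) (pow_ne_zero 2 hy0))))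
      have hden : y ^ 2 * Real.sqrt (Weff M E L y) ≠ 0 :=
        ne_of_gt (mul_pos (pow_pos (hyl y hy) 2) (Real.sqrt_pos.mpr hWy))
      exact continuousAt_const.div ((continuousAt_id.pow 2).mul hWc.sqrt) hden
    have hint : IntervalIntegrable f MeasureTheory.volume r₀ (r τ) :=
      ContinuousOn.intervalIntegrable (fun y hy => (hcont y hy).continuousWithinAt)
    have hmeas : StronglyMeasurableAtFilter f (nhds (r τ)) :=
      (weff_integrand_meas M E L).stronglyMeasurable.stronglyMeasurableAtFilter
    have hG : HasDerivAt (fun x => ∫ y in r₀..x, f y) (f (r τ)) (r τ) :=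
      intervalIntegral.integral_hasDerivAt_right hint hmeas
        (hcont (r τ) Set.right_mem_uIcc)
    have hGr : HasDerivAt (fun τ => ∫ y in r₀..r τ, f y) (f (r τ) * r' τ) τ :=
      hG.comp τ hrd
    have hFd : HasDerivAt F (φ' τ - L * (f (r τ) * r' τ)) τ :=
      hφd.sub (hGr.const_mul L)
    have hLeq := hL τ hτ
    have hEeq := hE τ hτ
    have hr'pos := hr' τ hτ
    have hWr : Weff M E L (r τ) = (r' τ) ^ 2 := by
      unfold Weff
      rw [← hEeq, ← hLeq]
      exact norm_alg (r τ) (t' τ) (r' τ) (φ' τ) M hRne hRMne (hnorm τ hτ)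
    have hsqrt : Real.sqrt (Weff M E L (r τ)) = r' τ := by
      rw [hWr, Real.sqrt_sq hr'pos.le]
    have hfr : f (r τ) = 1 / ((r τ) ^ 2 * r' τ) := by
      rw [hf]; simp only; rw [hsqrt]
    have hzero : φ' τ - L * (f (r τ) * r' τ) = 0 := by
      rw [hfr, ← hLeq]
      field_simp
      ring
    rw [hzero] at hFd
    exact hFd
  intro τ₁ hτ₁ τ₂ hτ₂
  have hle := Convex.norm_image_sub_le_of_norm_hasDerivWithin_le (C := 0)
    (fun x hx => (key x hx).hasDerivWithinAt)
    (fun x _ => by simp) (convex_Ioo a b) hτ₂ hτ₁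
  have h0 : ‖F τ₁ - F τ₂‖ ≤ 0 := by simpa using hle
  have hFeq : F τ₁ = F τ₂ :=
    sub_eq_zero.mp (norm_eq_zero.mp (le_antisymm h0 (norm_nonneg _)))
  simpa [hF, hf] using hFeq
end
end

section
/- Let M > 0 and let (t, r, φ) be a twice-differentiable unit-norm solution of the equatorial geodesic equations of Schwarzschild spacetime on an open real interval I with r(τ) > 2M, with constant energy E and constant angular momentum L, and assume r'(τ) > 0 for all τ ∈ I. Let r₀ > 2M be such that W(y) := E² − (1 − 2M/y)(1 + L²/y²) > 0 for every y in the closed interval with endpoints r₀ and r(τ), for every τ ∈ I. Then the LRL time function τ ↦ t(τ) − E ∫_{r₀}^{r(τ)} y dy/((y − 2M) √W(y)) is constant on I. -/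
noncomputable section

lemma g_contAt (M E L : ℝ) {y : ℝ} (hy0 : y ≠ 0) (hym : y - 2 * M ≠ 0)
    (hWy : 0 < Weff M E L y) :
    ContinuousAt (fun z => z / ((z - 2 * M) * Real.sqrt (Weff M E L z))) y := by
  have hW : ContinuousAt (Weff M E L) y := by
    unfold Weff
    exact continuousAt_const.sub
      ((continuousAt_const.sub (continuousAt_const.div continuousAt_id hy0)).mul
        (continuousAt_const.add
          (continuousAt_const.div (continuousAt_id.pow 2) (pow_ne_zero 2 hy0))))
  have hden : ContinuousAt (fun z => (z - 2 * M) * Real.sqrt (Weff M E L z)) y :=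
    (continuousAt_id.sub continuousAt_const).mul (Real.continuous_sqrt.continuousAt.comp hW)
  exact continuousAt_id.div hden (mul_ne_zero hym (Real.sqrt_pos.mpr hWy).ne')

/-- The LRL time `T = t - E ∫_{r₀}^{r} y dy/((y-2M) √W(y))` is constant along
any unit-norm solution of the equatorial geodesic equations with constant
energy `E`, constant angular momentum `L` and increasing radius. -/
theorem LRL_time_conserved (M a b : ℝ) (hM : 0 < M)
    (t t' r r' φ φ' : ℝ → ℝ) (E L r₀ : ℝ)
    (hgeo : SchwGeo M (Set.Ioo a b) t t' r r' φ φ')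
    (hnorm : ∀ τ ∈ Set.Ioo a b,
      -((r τ - 2 * M) / r τ) * (t' τ) ^ 2 + (r τ / (r τ - 2 * M)) * (r' τ) ^ 2
        + (r τ) ^ 2 * (φ' τ) ^ 2 = -1)
    (hE : ∀ τ ∈ Set.Ioo a b, (1 - 2 * M / r τ) * t' τ = E)
    (hL : ∀ τ ∈ Set.Ioo a b, (r τ) ^ 2 * φ' τ = L)
    (hr' : ∀ τ ∈ Set.Ioo a b, 0 < r' τ)
    (hr₀ : 2 * M < r₀)
    (hW : ∀ τ ∈ Set.Ioo a b, ∀ y ∈ Set.uIcc r₀ (r τ), 0 < Weff M E L y) :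
    ∀ τ₁ ∈ Set.Ioo a b, ∀ τ₂ ∈ Set.Ioo a b,
      t τ₁ - E * ∫ y in r₀..r τ₁, y / ((y - 2 * M) * Real.sqrt (Weff M E L y))
      = t τ₂ - E * ∫ y in r₀..r τ₂, y / ((y - 2 * M) * Real.sqrt (Weff M E L y)) := by
  set g : ℝ → ℝ := fun y => y / ((y - 2 * M) * Real.sqrt (Weff M E L y)) with hg
  set F : ℝ → ℝ := fun τ => t τ - E * ∫ y in r₀..r τ, g y with hF
  -- F has derivative 0 at each point of Ioo a b
  have hF0 : ∀ τ ∈ Set.Ioo a b, HasDerivAt F 0 τ := by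
    intro τ hτ
    obtain ⟨h2m, ht, hr, hφ, -, -, -⟩ := hgeo τ hτ
    have hR0 : (0 : ℝ) < r τ := by linarith
    have hRm : r τ - 2 * M ≠ 0 := sub_ne_zero.mpr (by linarith)
    -- points of uIcc are > 2M
    have huIcc : ∀ y ∈ Set.uIcc r₀ (r τ), 2 * M < y := by
      intro y hy
      have := hy.1
      rcases le_total r₀ (r τ) with h | h
      · rw [Set.uIcc_of_le h] at hy; linarith [hy.1]
      · rw [Set.uIcc_of_ge h] at hy; linarith [hy.1]
    -- g is continuous on uIcc r₀ (r τ)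
    have hcont : ContinuousOn g (Set.uIcc r₀ (r τ)) := by
      intro y hy
      have h1 : 2 * M < y := huIcc y hy
      exact (g_contAt M E L (by linarith : y ≠ 0) (sub_ne_zero.mpr (by linarith))
        (hW τ hτ y hy)).continuousWithinAt
    have hint : IntervalIntegrable g MeasureTheory.volume r₀ (r τ) :=
      hcont.intervalIntegrable
    have hmeas : StronglyMeasurableAtFilter g (nhds (r τ)) := by
      refine ⟨Set.univ, Filter.univ_mem, ?_⟩
      apply Measurable.aestronglyMeasurable
      show Measurable fun y => y / ((y - 2 * M) * Real.sqrt (Weff M E L y))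
      have hWm : Measurable (Weff M E L) := by
        unfold Weff
        exact measurable_const.sub
          ((measurable_const.sub (measurable_const.div measurable_id)).mul
            (measurable_const.add (measurable_const.div (measurable_id.pow_const 2))))
      exact measurable_id.div
        ((measurable_id.sub measurable_const).mul (Real.continuous_sqrt.measurable.comp hWm))
    have hcR : ContinuousAt g (r τ) :=
      g_contAt M E L hR0.ne' hRm (hW τ hτ (r τ) Set.right_mem_uIcc)
    have hI : HasDerivAt (fun x => ∫ y in r₀..x, g y) (g (r τ)) (r τ) :=
      intervalIntegral.integral_hasDerivAt_right hint hmeas hcR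
    have hcomp : HasDerivAt (fun τ => ∫ y in r₀..r τ, g y) (g (r τ) * r' τ) τ :=
      hI.comp τ hr
    have hFd : HasDerivAt F (t' τ - E * (g (r τ) * r' τ)) τ :=
      ht.sub (hcomp.const_mul E)
    -- the derivative is zero
    have hkey : (r' τ) ^ 2 = Weff M E L (r τ) := by
      have hn := hnorm τ hτ
      have hEτ := hE τ hτ
      have hLτ := hL τ hτ
      have hLL : L ^ 2 / (r τ) ^ 2 = (r τ) ^ 2 * (φ' τ) ^ 2 := by
        rw [← hLτ]; field_simp
      rw [Weff, ← hEτ, hLL]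
      field_simp at hn ⊢
      linear_combination hn
    have hsqrt : Real.sqrt (Weff M E L (r τ)) = r' τ := by
      rw [← hkey, Real.sqrt_sq (hr' τ hτ).le]
    have htval : t' τ = E * (r τ / (r τ - 2 * M)) := by
      have hEτ := hE τ hτ
      field_simp at hEτ ⊢
      linarith [hEτ]
    have hzero : t' τ - E * (g (r τ) * r' τ) = 0 := by
      show t' τ - E * (r τ / ((r τ - 2 * M) * Real.sqrt (Weff M E L (r τ))) * r' τ) = 0
      rw [hsqrt, htval]
      have hrne : r' τ ≠ 0 := (hr' τ hτ).ne'
      field_simp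
      ring
    rwa [hzero] at hFd
  -- conclude constancy on convex set
  intro τ₁ hτ₁ τ₂ hτ₂
  have hdiff : DifferentiableOn ℝ F (Set.Ioo a b) := fun x hx =>
    (hF0 x hx).differentiableAt.differentiableWithinAt
  have hfz : ∀ x ∈ Set.Ioo a b, fderivWithin ℝ F (Set.Ioo a b) x = 0 := by
    intro x hx
    have h := (hF0 x hx).hasFDerivAt
    rw [fderivWithin_of_isOpen isOpen_Ioo hx, h.fderiv]
    ext
    simp
  exact (convex_Ioo a b).is_const_of_fderivWithin_eq_zero hdiff hfz hτ₁ hτ₂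
end
end

section
/- Let M > 0 and let (t, r, φ) be a twice-differentiable unit-norm solution of the equatorial geodesic equations of Schwarzschild spacetime on an open real interval I with r(τ) > 2M, with constant energy E and constant angular momentum L. Then for every τ* ∈ I, r'(τ*) = 0 if and only if r(τ*) is a root of the cubic (E² − 1) x³ + 2M x² − L² x + 2M L² = 0. -/
noncomputable section

/-- A point `τ*` on a unit-norm equatorial geodesic is a turning point
(`r'(τ*) = 0`) if and only if `r(τ*)` is a root of the cubic
`(E² - 1)x³ + 2M x² - L² x + 2M L² = 0`. -/
theorem turning_point_cubic (M a b : ℝ) (hM : 0 < M)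
    (t t' r r' φ φ' : ℝ → ℝ) (E L : ℝ)
    (hgeo : SchwGeo M (Set.Ioo a b) t t' r r' φ φ')
    (hnorm : ∀ τ ∈ Set.Ioo a b,
      -((r τ - 2 * M) / r τ) * (t' τ) ^ 2 + (r τ / (r τ - 2 * M)) * (r' τ) ^ 2
        + (r τ) ^ 2 * (φ' τ) ^ 2 = -1)
    (hE : ∀ τ ∈ Set.Ioo a b, (1 - 2 * M / r τ) * t' τ = E)
    (hL : ∀ τ ∈ Set.Ioo a b, (r τ) ^ 2 * φ' τ = L) :
    ∀ τs ∈ Set.Ioo a b,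
      (r' τs = 0 ↔
        (E ^ 2 - 1) * (r τs) ^ 3 + 2 * M * (r τs) ^ 2 - L ^ 2 * r τs
          + 2 * M * L ^ 2 = 0) := by
  intro τs hτ
  obtain ⟨hx, -⟩ := hgeo τs hτ
  have hE' := hE τs hτ
  have hL' := hL τs hτ
  have hn := hnorm τs hτ
  set x := r τs with hxdef
  have hx0 : 0 < x := lt_trans (by linarith) hx
  have hxne : x ≠ 0 := ne_of_gt hx0
  have hxm : x - 2 * M ≠ 0 := by linarith
  have ht : t' τs = E * x / (x - 2 * M) := by
    field_simp at hE' ⊢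
    nlinarith [hE']
  have hφ : φ' τs = L / x ^ 2 := by
    field_simp
    linarith [hL']
  rw [ht, hφ] at hn
  have key : (E ^ 2 - 1) * x ^ 3 + 2 * M * x ^ 2 - L ^ 2 * x + 2 * M * L ^ 2
      = (r' τs) ^ 2 * x ^ 3 := by
    field_simp at hn
    have h3 : x ^ 3 * (x - 2 * M) ^ 2 ≠ 0 := by positivity
    apply mul_right_cancel₀ h3
    linear_combination (-(x ^ 3 * (x - 2 * M) ^ 2)) * hn
  constructor
  · intro h; rw [key, h]; ring
  · intro h
    rw [key] at h
    have hx3 : x ^ 3 ≠ 0 := pow_ne_zero _ hxne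
    have : (r' τs) ^ 2 = 0 := by
      rcases mul_eq_zero.mp h with h' | h'
      · exact h'
      · exact absurd h' hx3
    exact pow_eq_zero_iff (n := 2) (by norm_num) |>.mp this
end
end

section
/- Let M > 0 and let (t, r, φ) be a twice-differentiable unit-norm solution of the equatorial geodesic equations of Schwarzschild spacetime on an open real interval I with r(τ) > 2M, with constant energy E and constant angular momentum L. Then for every τ* ∈ I, r''(τ*) = 0 if and only if r(τ*) is a root of the quadratic M x² − L² x + 3 L² M = 0. -/
noncomputable section

/-- A point `τ*` on a unit-norm equatorial geodesic is a centripetal point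
(`r''(τ*) = 0`) if and only if `r(τ*)` is a root of the quadratic
`M x² - L² x + 3 L² M = 0`. -/
theorem centripetal_point_quadratic (M a b : ℝ) (hM : 0 < M)
    (t t' r r' φ φ' : ℝ → ℝ) (E L : ℝ)
    (hgeo : SchwGeo M (Set.Ioo a b) t t' r r' φ φ')
    (hnorm : ∀ τ ∈ Set.Ioo a b,
      -((r τ - 2 * M) / r τ) * (t' τ) ^ 2 + (r τ / (r τ - 2 * M)) * (r' τ) ^ 2
        + (r τ) ^ 2 * (φ' τ) ^ 2 = -1)
    (hE : ∀ τ ∈ Set.Ioo a b, (1 - 2 * M / r τ) * t' τ = E)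
    (hL : ∀ τ ∈ Set.Ioo a b, (r τ) ^ 2 * φ' τ = L) :
    ∀ τs ∈ Set.Ioo a b,
      (deriv r' τs = 0 ↔
        M * (r τs) ^ 2 - L ^ 2 * r τs + 3 * L ^ 2 * M = 0) := by
  intro τs hτ
  obtain ⟨hr2M, _, _, _, _, hr'', _⟩ := hgeo τs hτ
  have hn := hnorm τs hτ
  have hl := hL τs hτ
  set x := r τs with hx
  have hx0 : (0:ℝ) < x := lt_trans (by linarith) hr2M
  have hxne : x ≠ 0 := ne_of_gt hx0
  have hx2 : x - 2 * M ≠ 0 := by linarith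
  have key : deriv r' τs = -(M * x ^ 2 - L ^ 2 * x + 3 * L ^ 2 * M) / x ^ 4 := by
    rw [hr''.deriv]
    have hφ : φ' τs = L / x ^ 2 := by field_simp at hl ⊢; linarith
    field_simp at hn ⊢
    rw [hφ] at hn ⊢
    field_simp at hn ⊢
    linear_combination M * hn
  rw [key]
  constructor
  · intro h
    have := (div_eq_zero_iff.mp h).resolve_right (pow_ne_zero 4 hxne)
    linarith [neg_eq_zero.mp this]
  · intro h
    rw [h]; simp
end
end

section
/- Let L̄ be a real number with L̄² > 3, and define E₋² = 2/3 + (2/27) L̄² (1 − √((1 − 3/L̄²)³)) and E₊² = 2/3 + (2/27) L̄² (1 + √((1 − 3/L̄²)³)). Then 8/9 < E₋² ≤ 1, 8/9 < E₊², and E₋² < E₊². -/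
noncomputable section

private lemma crit_aux (L2 x s : ℝ) (hL2 : 0 < L2) (hx0 : 0 < x) (hx1 : x < 1)
    (h3 : (1 - x) * L2 = 3) (hs0 : 0 ≤ s) (hs2 : s ^ 2 = x ^ 3) :
    8 / 9 < 2 / 3 + 2 / 27 * L2 * (1 - s) ∧
    2 / 3 + 2 / 27 * L2 * (1 - s) ≤ 1 ∧
    8 / 9 < 2 / 3 + 2 / 27 * L2 * (1 + s) ∧
    2 / 3 + 2 / 27 * L2 * (1 - s) < 2 / 3 + 2 / 27 * L2 * (1 + s) := by
  have hspos : 0 < s := hs0.lt_of_ne' (by rintro rfl; nlinarith [pow_pos hx0 3])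
  have hsq : s ^ 2 < x ^ 2 := by
    nlinarith [mul_pos (mul_pos hx0 hx0) (sub_pos.2 hx1)]
  have hsx : s < x := lt_of_pow_lt_pow_left₀ 2 hx0.le hsq
  have goal1 : 8 / 9 < 2 / 3 + 2 / 27 * L2 * (1 - s) := by
    nlinarith [mul_pos hL2 (sub_pos.2 hsx)]
  have hs_ge : (3 * x - 1) / 2 ≤ s := by
    rcases le_or_gt (3 * x - 1) 0 with h | h
    · linarith
    · nlinarith [sq_nonneg (2 * s - (3 * x - 1)), sq_nonneg (x - 1), sq_nonneg x]
  have goal2 : 2 / 3 + 2 / 27 * L2 * (1 - s) ≤ 1 := by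
    have key : 0 ≤ L2 * ((3/2) * (1 - x) - (1 - s)) :=
      mul_nonneg hL2.le (by linarith)
    nlinarith [key]
  refine ⟨goal1, goal2, ?_, ?_⟩
  · nlinarith [mul_pos hL2 hspos]
  · nlinarith [mul_pos hL2 hspos]

/-- For `L̄² > 3`, the critical energy-squared values
`E±² = 2/3 + (2/27) L̄² (1 ± √((1 - 3/L̄²)³))` satisfy
`8/9 < E₋² ≤ 1`, `8/9 < E₊²`, and `E₋² < E₊²`. -/
theorem critical_energies (Lbar : ℝ) (hL : 3 < Lbar ^ 2) :
    8 / 9 < 2 / 3 + 2 / 27 * Lbar ^ 2 * (1 - Real.sqrt ((1 - 3 / Lbar ^ 2) ^ 3)) ∧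
    2 / 3 + 2 / 27 * Lbar ^ 2 * (1 - Real.sqrt ((1 - 3 / Lbar ^ 2) ^ 3)) ≤ 1 ∧
    8 / 9 < 2 / 3 + 2 / 27 * Lbar ^ 2 * (1 + Real.sqrt ((1 - 3 / Lbar ^ 2) ^ 3)) ∧
    2 / 3 + 2 / 27 * Lbar ^ 2 * (1 - Real.sqrt ((1 - 3 / Lbar ^ 2) ^ 3)) <
      2 / 3 + 2 / 27 * Lbar ^ 2 * (1 + Real.sqrt ((1 - 3 / Lbar ^ 2) ^ 3)) := by
  have hL2 : (0:ℝ) < Lbar ^ 2 := by linarith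
  have hx0 : 0 < 1 - 3 / Lbar ^ 2 := by
    have : 3 / Lbar ^ 2 < 1 := (div_lt_one hL2).2 hL
    linarith
  have hx1 : 1 - 3 / Lbar ^ 2 < 1 := by
    have : 0 < 3 / Lbar ^ 2 := by positivity
    linarith
  have h3 : (1 - (1 - 3 / Lbar ^ 2)) * Lbar ^ 2 = 3 := by rw [sub_sub_cancel, div_mul_cancel₀ _ hL2.ne']
  exact crit_aux (Lbar ^ 2) (1 - 3 / Lbar ^ 2) _ hL2 hx0 hx1 h3
    (Real.sqrt_nonneg _) (Real.sq_sqrt (by positivity))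
end
end

section
/- Let M > 0 and let ℒ(t, r, φ, ṫ, ṙ, φ̇) = (1/2)(−((r−2M)/r) ṫ² + (r/(r−2M)) ṙ² + r² φ̇²) on the domain r > 2M. Suppose P^t, P^r, P^φ, Ψ are differentiable functions of (λ, t, r, φ, ṫ, ṙ, φ̇) such that the variational symmetry identity P^t ∂ℒ/∂t + P^r ∂ℒ/∂r + P^φ ∂ℒ/∂φ + (D P^t) ∂ℒ/∂ṫ + (D P^r) ∂ℒ/∂ṙ + (D P^φ) ∂ℒ/∂φ̇ = D Ψ holds identically in (λ, t, r, φ, ṫ, ṙ, φ̇, ẗ, r̈, φ̈) with r > 2M, where D = ∂_λ + ṫ ∂_t + ṙ ∂_r + φ̇ ∂_φ + ẗ ∂_ṫ + r̈ ∂_ṙ + φ̈ ∂_φ̇. Then along every twice-differentiable solution (t(λ), r(λ), φ(λ)) of the equatorial geodesic equations (with λ as parameter), the quantity C(λ) = −((r−2M)/r) t'(λ) P^t + (r/(r−2M)) r'(λ) P^r + r² φ'(λ) P^φ − Ψ, with P^t, P^r, P^φ, Ψ evaluated at (λ, t(λ), r(λ), φ(λ), t'(λ), r'(λ), φ'(λ)),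 is constant. -/
noncomputable section

/-- Partial derivative of a function of the seven Lagrangian variables
`(λ, t, r, φ, ṫ, ṙ, φ̇)` with respect to the `i`-th variable. -/
def pd (F : (Fin 7 → ℝ) → ℝ) (i : Fin 7) (x : Fin 7 → ℝ) : ℝ :=
  fderiv ℝ F x (Pi.single i 1)

/-- The total derivative operator
`D = ∂_λ + ṫ ∂_t + ṙ ∂_r + φ̇ ∂_φ + ẗ ∂_ṫ + r̈ ∂_ṙ + φ̈ ∂_φ̇`
acting on a function of the seven Lagrangian variables, for given
second-derivative values `ẗ = att`, `r̈ = arr`, `φ̈ = aφ`. -/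
def Dtot (F : (Fin 7 → ℝ) → ℝ) (x : Fin 7 → ℝ) (att arr aφ : ℝ) : ℝ :=
  fderiv ℝ F x ![1, x 4, x 5, x 6, att, arr, aφ]

/-- The geodesic Lagrangian
`ℒ = (1/2)(-((r-2M)/r) ṫ² + (r/(r-2M)) ṙ² + r² φ̇²)` as a function of the
seven Lagrangian variables `(λ, t, r, φ, ṫ, ṙ, φ̇)`. -/
def Lag (M : ℝ) (x : Fin 7 → ℝ) : ℝ :=
  (1 / 2) * (-((x 2 - 2 * M) / x 2) * (x 4) ^ 2
    + (x 2 / (x 2 - 2 * M)) * (x 5) ^ 2 + (x 2) ^ 2 * (x 6) ^ 2)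

/-- Explicit formula for the Fréchet derivative of the geodesic Lagrangian. -/
theorem lag_fderiv (M : ℝ) (x : Fin 7 → ℝ) (h0 : x 2 ≠ 0) (h2 : x 2 - 2*M ≠ 0) (v : Fin 7 → ℝ) :
    fderiv ℝ (Lag M) x v =
      (-(M / (x 2)^2) * (x 4)^2 - (M/((x 2 - 2*M)^2)) * (x 5)^2 + x 2 * (x 6)^2) * v 2
      + (-((x 2 - 2*M)/x 2) * x 4) * v 4
      + ((x 2/(x 2 - 2*M)) * x 5) * v 5
      + ((x 2)^2 * x 6) * v 6 := by
  have p : ∀ i : Fin 7, HasFDerivAt (fun x : Fin 7 → ℝ => x i)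
      (ContinuousLinearMap.proj i : (Fin 7 → ℝ) →L[ℝ] ℝ) x :=
    fun i => hasFDerivAt_apply i x
  have hinv2 := (hasDerivAt_inv h0).comp_hasFDerivAt x (p 2)
  have hinv2' := (hasDerivAt_inv h2).comp_hasFDerivAt x ((p 2).sub_const (2*M))
  have hA := (((p 2).sub_const (2*M)).mul hinv2).neg.mul ((p 4).mul (p 4))
  have hB := ((p 2).mul hinv2').mul ((p 5).mul (p 5))
  have hC := (((p 2).mul (p 2)).mul ((p 6).mul (p 6)))
  have hL := ((hA.add hB).add hC).const_mul (1/2 : ℝ)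
  have hLag := hL.congr_of_eventuallyEq (f₁ := Lag M) (Filter.Eventually.of_forall (fun y => by
    unfold Lag; simp only [Function.comp, Function.comp_apply, Pi.mul_apply, Pi.add_apply, Pi.neg_apply, Pi.pow_apply]; ring))
  rw [hLag.fderiv]
  simp only [ContinuousLinearMap.coe_smul', ContinuousLinearMap.add_apply,
    ContinuousLinearMap.smul_apply, ContinuousLinearMap.proj_apply, Pi.smul_apply,
    smul_eq_mul, ContinuousLinearMap.coe_sub', Pi.sub_apply, Pi.add_apply,
    ContinuousLinearMap.coe_add', Pi.neg_apply, ContinuousLinearMap.neg_apply, Function.comp,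
    Pi.mul_apply, Pi.pow_apply, Function.comp_apply]
  field_simp
  ring

set_option maxHeartbeats 1000000 in
/-- Noether's theorem, direction (i), for the equatorial geodesic Lagrangian:
every variational symmetry `(P^t, P^r, P^φ; Ψ)` yields a quantity
`C = ∂ℒ/∂ṫ P^t + ∂ℒ/∂ṙ P^r + ∂ℒ/∂φ̇ P^φ - Ψ` that is constant along every
solution of the equatorial geodesic equations. -/
theorem noether_direct (M : ℝ) (hM : 0 < M)
    (Pt Pr Pφ Ψ : (Fin 7 → ℝ) → ℝ)
    (hdiff : ∀ x : Fin 7 → ℝ, 2 * M < x 2 →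
      DifferentiableAt ℝ Pt x ∧ DifferentiableAt ℝ Pr x ∧
      DifferentiableAt ℝ Pφ x ∧ DifferentiableAt ℝ Ψ x)
    (hsym : ∀ x : Fin 7 → ℝ, 2 * M < x 2 → ∀ att arr aφ : ℝ,
      Pt x * pd (Lag M) 1 x + Pr x * pd (Lag M) 2 x + Pφ x * pd (Lag M) 3 x
        + Dtot Pt x att arr aφ * pd (Lag M) 4 x
        + Dtot Pr x att arr aφ * pd (Lag M) 5 x
        + Dtot Pφ x att arr aφ * pd (Lag M) 6 x
      = Dtot Ψ x att arr aφ)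
    (a b : ℝ) (t t' r r' φ φ' : ℝ → ℝ)
    (hgeo : SchwGeo M (Set.Ioo a b) t t' r r' φ φ') :
    ∀ τ₁ ∈ Set.Ioo a b, ∀ τ₂ ∈ Set.Ioo a b,
      (fun τ : ℝ =>
        -((r τ - 2 * M) / r τ) * t' τ * Pt ![τ, t τ, r τ, φ τ, t' τ, r' τ, φ' τ]
        + (r τ / (r τ - 2 * M)) * r' τ * Pr ![τ, t τ, r τ, φ τ, t' τ, r' τ, φ' τ]
        + (r τ) ^ 2 * φ' τ * Pφ ![τ, t τ, r τ, φ τ, t' τ, r' τ, φ' τ]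
        - Ψ ![τ, t τ, r τ, φ τ, t' τ, r' τ, φ' τ]) τ₁
      = (fun τ : ℝ =>
        -((r τ - 2 * M) / r τ) * t' τ * Pt ![τ, t τ, r τ, φ τ, t' τ, r' τ, φ' τ]
        + (r τ / (r τ - 2 * M)) * r' τ * Pr ![τ, t τ, r τ, φ τ, t' τ, r' τ, φ' τ]
        + (r τ) ^ 2 * φ' τ * Pφ ![τ, t τ, r τ, φ τ, t' τ, r' τ, φ' τ]
        - Ψ ![τ, t τ, r τ, φ τ, t' τ, r' τ, φ' τ]) τ₂ := by
  set C : ℝ → ℝ := fun τ : ℝ =>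
        -((r τ - 2 * M) / r τ) * t' τ * Pt ![τ, t τ, r τ, φ τ, t' τ, r' τ, φ' τ]
        + (r τ / (r τ - 2 * M)) * r' τ * Pr ![τ, t τ, r τ, φ τ, t' τ, r' τ, φ' τ]
        + (r τ) ^ 2 * φ' τ * Pφ ![τ, t τ, r τ, φ τ, t' τ, r' τ, φ' τ]
        - Ψ ![τ, t τ, r τ, φ τ, t' τ, r' τ, φ' τ] with hCdef
  have key : ∀ σ ∈ Set.Ioo a b, HasDerivAt C 0 σ := by
    intro σ hσ
    obtain ⟨h2M, ht, hr, hφt, ht', hr', hφ'⟩ := hgeo σ hσ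
    have hrpos : 0 < r σ := lt_trans (by linarith) h2M
    have hrne : r σ ≠ 0 := ne_of_gt hrpos
    have hrm : r σ - 2 * M ≠ 0 := sub_ne_zero.mpr (ne_of_gt h2M)
    set att := -(2 * M / (r σ * (r σ - 2 * M))) * t' σ * r' σ with hattdef
    set arr := -(M * (r σ - 2 * M) / (r σ) ^ 3) * (t' σ) ^ 2
        + (M / (r σ * (r σ - 2 * M))) * (r' σ) ^ 2
        + (r σ - 2 * M) * (φ' σ) ^ 2 with harrdef
    set aph := -(2 / r σ) * r' σ * φ' σ with haphdef
    -- the lifted curve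
    have hγ : HasDerivAt (fun s : ℝ => (![s, t s, r s, φ s, t' s, r' s, φ' s] : Fin 7 → ℝ))
        (![1, t' σ, r' σ, φ' σ, att, arr, aph]) σ := by
      rw [hasDerivAt_pi]
      intro i
      fin_cases i
      · simpa using hasDerivAt_id' σ
      · exact ht
      · exact hr
      · exact hφt
      · exact ht'
      · exact hr'
      · exact hφ'
    have hx2 : 2 * M < (![σ, t σ, r σ, φ σ, t' σ, r' σ, φ' σ] : Fin 7 → ℝ) 2 := h2M
    obtain ⟨dPt, dPr, dPφ, dΨ⟩ := hdiff _ hx2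
    -- derivatives of the composites
    have hPt : HasDerivAt (fun s => Pt ![s, t s, r s, φ s, t' s, r' s, φ' s])
        (fderiv ℝ Pt (![σ, t σ, r σ, φ σ, t' σ, r' σ, φ' σ])
          (![1, t' σ, r' σ, φ' σ, att, arr, aph])) σ :=
      dPt.hasFDerivAt.comp_hasDerivAt σ hγ
    have hPr : HasDerivAt (fun s => Pr ![s, t s, r s, φ s, t' s, r' s, φ' s])
        (fderiv ℝ Pr (![σ, t σ, r σ, φ σ, t' σ, r' σ, φ' σ])
          (![1, t' σ, r' σ, φ' σ, att, arr, aph])) σ :=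
      dPr.hasFDerivAt.comp_hasDerivAt σ hγ
    have hPφ : HasDerivAt (fun s => Pφ ![s, t s, r s, φ s, t' s, r' s, φ' s])
        (fderiv ℝ Pφ (![σ, t σ, r σ, φ σ, t' σ, r' σ, φ' σ])
          (![1, t' σ, r' σ, φ' σ, att, arr, aph])) σ :=
      dPφ.hasFDerivAt.comp_hasDerivAt σ hγ
    have hΨc : HasDerivAt (fun s => Ψ ![s, t s, r s, φ s, t' s, r' s, φ' s])
        (fderiv ℝ Ψ (![σ, t σ, r σ, φ σ, t' σ, r' σ, φ' σ])
          (![1, t' σ, r' σ, φ' σ, att, arr, aph])) σ :=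
      dΨ.hasFDerivAt.comp_hasDerivAt σ hγ
    -- derivatives of the coefficient functions
    have hg1 : HasDerivAt (fun s => -((r s - 2 * M) / r s) * t' s)
        (-((r' σ * r σ - (r σ - 2 * M) * r' σ) / (r σ) ^ 2) * t' σ
          + (-((r σ - 2 * M) / r σ)) * att) σ :=
      (((hr.sub_const (2*M)).div hr hrne).neg.mul ht')
    have hg2 : HasDerivAt (fun s => (r s / (r s - 2 * M)) * r' s)
        (((r' σ * (r σ - 2 * M) - r σ * r' σ) / (r σ - 2 * M) ^ 2) * r' σ
          + (r σ / (r σ - 2 * M)) * arr) σ :=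
      ((hr.div (hr.sub_const (2*M)) hrm).mul hr')
    have hg3 : HasDerivAt (fun s => (r s) ^ 2 * φ' s)
        ((↑2 * r σ ^ (2 - 1) * r' σ) * φ' σ + (r σ) ^ 2 * aph) σ :=
      ((hr.pow 2).mul hφ')
    have hCd := (((hg1.mul hPt).add (hg2.mul hPr)).add (hg3.mul hPφ)).sub hΨc
    -- the symmetry identity at this point
    have hsymx := hsym _ hx2 att arr aph
    have hD : ∀ F : (Fin 7 → ℝ) → ℝ,
        Dtot F (![σ, t σ, r σ, φ σ, t' σ, r' σ, φ' σ]) att arr aph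
        = fderiv ℝ F (![σ, t σ, r σ, φ σ, t' σ, r' σ, φ' σ])
            (![1, t' σ, r' σ, φ' σ, att, arr, aph]) := fun F => rfl
    rw [hD Pt, hD Pr, hD Pφ, hD Ψ] at hsymx
    have e2 : (![σ, t σ, r σ, φ σ, t' σ, r' σ, φ' σ] : Fin 7 → ℝ) 2 = r σ := rfl
    have e4 : (![σ, t σ, r σ, φ σ, t' σ, r' σ, φ' σ] : Fin 7 → ℝ) 4 = t' σ := rfl
    have e5 : (![σ, t σ, r σ, φ σ, t' σ, r' σ, φ' σ] : Fin 7 → ℝ) 5 = r' σ := rfl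
    have e6 : (![σ, t σ, r σ, φ σ, t' σ, r' σ, φ' σ] : Fin 7 → ℝ) 6 = φ' σ := rfl
    have hx0 : (![σ, t σ, r σ, φ σ, t' σ, r' σ, φ' σ] : Fin 7 → ℝ) 2 ≠ 0 := hrne
    have hxm : (![σ, t σ, r σ, φ σ, t' σ, r' σ, φ' σ] : Fin 7 → ℝ) 2 - 2 * M ≠ 0 := hrm
    have hpd1 : pd (Lag M) 1 (![σ, t σ, r σ, φ σ, t' σ, r' σ, φ' σ]) = 0 := by
      unfold pd; rw [lag_fderiv M _ hx0 hxm, e2, e4, e5, e6]; simp [Pi.single_apply]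
    have hpd3 : pd (Lag M) 3 (![σ, t σ, r σ, φ σ, t' σ, r' σ, φ' σ]) = 0 := by
      unfold pd; rw [lag_fderiv M _ hx0 hxm, e2, e4, e5, e6]; simp [Pi.single_apply]
    have hpd2 : pd (Lag M) 2 (![σ, t σ, r σ, φ σ, t' σ, r' σ, φ' σ])
        = -(M / (r σ)^2) * (t' σ)^2 - (M/((r σ - 2*M)^2)) * (r' σ)^2 + r σ * (φ' σ)^2 := by
      unfold pd; rw [lag_fderiv M _ hx0 hxm, e2, e4, e5, e6]; simp [Pi.single_apply]
    have hpd4 : pd (Lag M) 4 (![σ, t σ, r σ, φ σ, t' σ, r' σ, φ' σ])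
        = -((r σ - 2*M)/r σ) * t' σ := by
      unfold pd; rw [lag_fderiv M _ hx0 hxm, e2, e4, e5, e6]; simp [Pi.single_apply]
    have hpd5 : pd (Lag M) 5 (![σ, t σ, r σ, φ σ, t' σ, r' σ, φ' σ])
        = (r σ/(r σ - 2*M)) * r' σ := by
      unfold pd; rw [lag_fderiv M _ hx0 hxm, e2, e4, e5, e6]; simp [Pi.single_apply]
    have hpd6 : pd (Lag M) 6 (![σ, t σ, r σ, φ σ, t' σ, r' σ, φ' σ])
        = (r σ)^2 * φ' σ := by
      unfold pd; rw [lag_fderiv M _ hx0 hxm, e2, e4, e5, e6]; simp [Pi.single_apply]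
    rw [hpd1, hpd2, hpd3, hpd4, hpd5, hpd6] at hsymx
    have hval : (-((r' σ * r σ - (r σ - 2 * M) * r' σ) / (r σ) ^ 2) * t' σ
          + (-((r σ - 2 * M) / r σ)) * att)
          * Pt (![σ, t σ, r σ, φ σ, t' σ, r' σ, φ' σ])
        + (-((r σ - 2 * M) / r σ) * t' σ)
          * fderiv ℝ Pt (![σ, t σ, r σ, φ σ, t' σ, r' σ, φ' σ])
              (![1, t' σ, r' σ, φ' σ, att, arr, aph])
        + ((((r' σ * (r σ - 2 * M) - r σ * r' σ) / (r σ - 2 * M) ^ 2) * r' σ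
            + (r σ / (r σ - 2 * M)) * arr)
          * Pr (![σ, t σ, r σ, φ σ, t' σ, r' σ, φ' σ])
          + ((r σ / (r σ - 2 * M)) * r' σ)
            * fderiv ℝ Pr (![σ, t σ, r σ, φ σ, t' σ, r' σ, φ' σ])
                (![1, t' σ, r' σ, φ' σ, att, arr, aph]))
        + (((↑2 * r σ ^ (2 - 1) * r' σ) * φ' σ + (r σ) ^ 2 * aph)
          * Pφ (![σ, t σ, r σ, φ σ, t' σ, r' σ, φ' σ])
          + ((r σ) ^ 2 * φ' σ)
            * fderiv ℝ Pφ (![σ, t σ, r σ, φ σ, t' σ, r' σ, φ' σ])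
                (![1, t' σ, r' σ, φ' σ, att, arr, aph]))
        - fderiv ℝ Ψ (![σ, t σ, r σ, φ σ, t' σ, r' σ, φ' σ])
            (![1, t' σ, r' σ, φ' σ, att, arr, aph]) = 0 := by
      have hE1 : -((r' σ * r σ - (r σ - 2 * M) * r' σ) / (r σ) ^ 2) * t' σ
          + (-((r σ - 2 * M) / r σ)) * att = 0 := by
        rw [hattdef]; field_simp; ring
      have hE3 : (↑2 * r σ ^ (2 - 1) * r' σ) * φ' σ + (r σ) ^ 2 * aph = 0 := by
        rw [haphdef]; field_simp; ring
      have hE2 : ((r' σ * (r σ - 2 * M) - r σ * r' σ) / (r σ - 2 * M) ^ 2) * r' σ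
          + (r σ / (r σ - 2 * M)) * arr
          = -(M / (r σ)^2) * (t' σ)^2 - (M/((r σ - 2*M)^2)) * (r' σ)^2 + r σ * (φ' σ)^2 := by
        rw [harrdef]; field_simp; ring
      rw [hE1, hE2, hE3, ← hsymx]
      ring
    rw [hval] at hCd
    exact hCd
  -- constancy from vanishing derivative
  have mono : ∀ u ∈ Set.Ioo a b, ∀ v ∈ Set.Ioo a b, u < v → C u = C v := by
    intro u hu v hv huv
    have hsub : Set.Icc u v ⊆ Set.Ioo a b := fun z hz =>
      ⟨lt_of_lt_of_le hu.1 hz.1, lt_of_le_of_lt hz.2 hv.2⟩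
    have hcont : ContinuousOn C (Set.Icc u v) := fun z hz =>
      ((key z (hsub hz)).continuousAt).continuousWithinAt
    have hderiv : ∀ z ∈ Set.Ioo u v, HasDerivAt C ((fun _ => (0:ℝ)) z) z := fun z hz =>
      key z (hsub ⟨le_of_lt hz.1, le_of_lt hz.2⟩)
    obtain ⟨c, _, hc⟩ := exists_hasDerivAt_eq_slope C (fun _ => 0) huv hcont hderiv
    have h0 : (C v - C u) / (v - u) = 0 := hc.symm
    have hsub0 : C v - C u = 0 := by
      rcases div_eq_zero_iff.mp h0 with h | h
      · exact h
      · exact absurd h (sub_ne_zero.mpr (ne_of_gt huv))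
    exact (sub_eq_zero.mp hsub0).symm
  intro τ₁ h₁ τ₂ h₂
  rcases lt_trichotomy τ₁ τ₂ with h | h | h
  · exact mono τ₁ h₁ τ₂ h₂ h
  · rw [h]
  · exact (mono τ₂ h₂ τ₁ h₁ h).symm
end
end

section
/- Let M > 0 and let F^t(t,r,φ,ṫ,ṙ,φ̇) = −(2M/(r(r−2M))) ṫ ṙ, F^r = −(M(r−2M)/r³) ṫ² + (M/(r(r−2M))) ṙ² + (r−2M) φ̇², F^φ = −(2/r) ṙ φ̇ denote the right-hand sides of the equatorial geodesic equations. Let C be a twice-differentiable function of (λ, t, r, φ, ṫ, ṙ, φ̇) on the domain r > 2M satisfying the on-shell conservation identity ∂C/∂λ + ṫ ∂C/∂t + ṙ ∂C/∂r + φ̇ ∂C/∂φ + F^t ∂C/∂ṫ + F^r ∂C/∂ṙ + F^φ ∂C/∂φ̇ = 0 identically. Define P^t = −(r/(r−2M)) ∂C/∂ṫ, P^r = ((r−2M)/r) ∂C/∂ṙ, P^φ = (1/r²) ∂C/∂φ̇, and Ψ = −((r−2M)/r) ṫ P^t + (r/(r−2M)) ṙ P^r + r² φ̇ P^φ − C.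 Then the variational symmetry identity P^t ∂ℒ/∂t + P^r ∂ℒ/∂r + P^φ ∂ℒ/∂φ + (D P^t) ∂ℒ/∂ṫ + (D P^r) ∂ℒ/∂ṙ + (D P^φ) ∂ℒ/∂φ̇ = D Ψ holds identically in (λ, t, r, φ, ṫ, ṙ, φ̇, ẗ, r̈, φ̈) with r > 2M, where ℒ = (1/2)(−((r−2M)/r) ṫ² + (r/(r−2M)) ṙ² + r² φ̇²) and D = ∂_λ + ṫ ∂_t + ṙ ∂_r + φ̇ ∂_φ + ẗ ∂_ṫ + r̈ ∂_ṙ + φ̈ ∂_φ̇. -/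
set_option maxHeartbeats 4000000
noncomputable section

/-- Right-hand side `F^t` of the equatorial geodesic equations. -/
def Ft (M : ℝ) (x : Fin 7 → ℝ) : ℝ :=
  -(2 * M / (x 2 * (x 2 - 2 * M))) * x 4 * x 5

/-- Right-hand side `F^r` of the equatorial geodesic equations. -/
def Fr (M : ℝ) (x : Fin 7 → ℝ) : ℝ :=
  -(M * (x 2 - 2 * M) / (x 2) ^ 3) * (x 4) ^ 2
    + (M / (x 2 * (x 2 - 2 * M))) * (x 5) ^ 2 + (x 2 - 2 * M) * (x 6) ^ 2

/-- Right-hand side `F^φ` of the equatorial geodesic equations. -/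
def Fφ (M : ℝ) (x : Fin 7 → ℝ) : ℝ :=
  -(2 / x 2) * x 5 * x 6

private lemma hasFDerivAt_comp_proj' {g : ℝ → ℝ} {g' : ℝ} (i : Fin 7) {x : Fin 7 → ℝ}
    (h : HasDerivAt g g' (x i)) :
    HasFDerivAt (fun y : Fin 7 → ℝ => g (y i))
      (g' • (ContinuousLinearMap.proj i : (Fin 7 → ℝ) →L[ℝ] ℝ)) x :=
  h.comp_hasFDerivAt x (ContinuousLinearMap.proj i : (Fin 7 → ℝ) →L[ℝ] ℝ).hasFDerivAt

private lemma pd_eq' {F : (Fin 7 → ℝ) → ℝ} {L : (Fin 7 → ℝ) →L[ℝ] ℝ} {x : Fin 7 → ℝ}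
    (h : HasFDerivAt F L x) (i : Fin 7) : pd F i x = L (Pi.single i 1) := by
  rw [pd, h.fderiv]

private lemma dtot_eq' {F : (Fin 7 → ℝ) → ℝ} {L : (Fin 7 → ℝ) →L[ℝ] ℝ} {x : Fin 7 → ℝ}
    {att arr aφ : ℝ} (h : HasFDerivAt F L x) :
    Dtot F x att arr aφ = L ![1, x 4, x 5, x 6, att, arr, aφ] := by
  rw [Dtot, h.fderiv]

/-- Noether's theorem, converse direction (ii), for the equatorial geodesic
Lagrangian: every conserved quantity `C` yields a variational symmetry with
characteristic `P^t = -(r/(r-2M)) ∂C/∂ṫ`, `P^r = ((r-2M)/r) ∂C/∂ṙ`,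
`P^φ = (1/r²) ∂C/∂φ̇` and boundary term
`Ψ = -((r-2M)/r) ṫ P^t + (r/(r-2M)) ṙ P^r + r² φ̇ P^φ - C`. -/
theorem noether_converse (M : ℝ) (hM : 0 < M)
    (C : (Fin 7 → ℝ) → ℝ)
    (hC : ∀ x : Fin 7 → ℝ, 2 * M < x 2 → ContDiffAt ℝ 2 C x)
    (hcons : ∀ x : Fin 7 → ℝ, 2 * M < x 2 →
      pd C 0 x + x 4 * pd C 1 x + x 5 * pd C 2 x + x 6 * pd C 3 x
        + Ft M x * pd C 4 x + Fr M x * pd C 5 x + Fφ M x * pd C 6 x = 0)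
    (Pt Pr Pφ Ψ : (Fin 7 → ℝ) → ℝ)
    (hPt : Pt = fun x => -(x 2 / (x 2 - 2 * M)) * pd C 4 x)
    (hPr : Pr = fun x => ((x 2 - 2 * M) / x 2) * pd C 5 x)
    (hPφ : Pφ = fun x => (1 / (x 2) ^ 2) * pd C 6 x)
    (hΨ : Ψ = fun x => -((x 2 - 2 * M) / x 2) * x 4 * Pt x
        + (x 2 / (x 2 - 2 * M)) * x 5 * Pr x + (x 2) ^ 2 * x 6 * Pφ x - C x) :
    ∀ x : Fin 7 → ℝ, 2 * M < x 2 → ∀ att arr aφ : ℝ,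
      Pt x * pd (Lag M) 1 x + Pr x * pd (Lag M) 2 x + Pφ x * pd (Lag M) 3 x
        + Dtot Pt x att arr aφ * pd (Lag M) 4 x
        + Dtot Pr x att arr aφ * pd (Lag M) 5 x
        + Dtot Pφ x att arr aφ * pd (Lag M) 6 x
      = Dtot Ψ x att arr aφ := by
  intro x hx att arr aφ
  have h0 : (0:ℝ) < x 2 := lt_trans (by linarith) hx
  have hr : x 2 ≠ 0 := ne_of_gt h0
  have hs : x 2 - 2*M ≠ 0 := ne_of_gt (by linarith)
  -- differentiability of the partials of C
  have hC2 : ContDiffAt ℝ 2 C x := hC x hx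
  have hdC : DifferentiableAt ℝ (fderiv ℝ C) x :=
    (hC2.fderiv_right (m := 1) (by norm_num)).differentiableAt (by norm_num)
  have hpd : ∀ i : Fin 7, DifferentiableAt ℝ (pd C i) x := by
    intro i
    have h1 : pd C i = fun y =>
        (ContinuousLinearMap.apply ℝ ℝ (Pi.single i (1:ℝ))) (fderiv ℝ C y) := by
      funext y; simp [pd]
    rw [h1]
    exact DifferentiableAt.comp x (ContinuousLinearMap.differentiableAt _) hdC
  -- derivatives of the 1-variable coefficient functions at r = x 2
  have hb : HasDerivAt (fun s : ℝ => (s - 2*M)/s)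
      ((1*(x 2) - (x 2 - 2*M)*1)/(x 2)^2) (x 2) :=
    ((hasDerivAt_id _).sub_const _).div (hasDerivAt_id _) hr
  have hg2 : HasDerivAt (fun s : ℝ => s/(s - 2*M))
      ((1*(x 2 - 2*M) - x 2*1)/(x 2 - 2*M)^2) (x 2) :=
    (hasDerivAt_id _).div ((hasDerivAt_id _).sub_const _) hs
  have hinv2 : HasDerivAt (fun s : ℝ => 1/(s^2))
      ((0*(x 2)^2 - 1*(2*(x 2)^1))/((x 2)^2)^2) (x 2) :=
    (hasDerivAt_const _ _).div (hasDerivAt_pow 2 (x 2)) (pow_ne_zero 2 hr)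
  -- the Lagrangian
  have hLag : HasFDerivAt (Lag M) _ x :=
    ((((hasFDerivAt_comp_proj' 2 hb.neg).mul
      (hasFDerivAt_comp_proj' 4 (hasDerivAt_pow 2 (x 4)))).add
      ((hasFDerivAt_comp_proj' 2 hg2).mul
      (hasFDerivAt_comp_proj' 5 (hasDerivAt_pow 2 (x 5))))).add
      ((hasFDerivAt_comp_proj' 2 (hasDerivAt_pow 2 (x 2))).mul
      (hasFDerivAt_comp_proj' 6 (hasDerivAt_pow 2 (x 6))))).const_mul (1/2 : ℝ)
  -- the characteristics
  have hDPt : HasFDerivAt (fun y : Fin 7 → ℝ => -(y 2 / (y 2 - 2*M)) * pd C 4 y) _ x :=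
    (hasFDerivAt_comp_proj' 2 hg2.neg).mul (hpd 4).hasFDerivAt
  have hDPr : HasFDerivAt (fun y : Fin 7 → ℝ => ((y 2 - 2*M) / y 2) * pd C 5 y) _ x :=
    (hasFDerivAt_comp_proj' 2 hb).mul (hpd 5).hasFDerivAt
  have hDPφ : HasFDerivAt (fun y : Fin 7 → ℝ => (1 / (y 2)^2) * pd C 6 y) _ x :=
    (hasFDerivAt_comp_proj' 2 hinv2).mul (hpd 6).hasFDerivAt
  -- the boundary term
  have hU : ∀ᶠ y in nhds x, 2*M < y 2 :=
    (isOpen_lt continuous_const (continuous_apply 2)).mem_nhds hx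
  have hev : Ψ =ᶠ[nhds x]
      (fun y => y 4 * pd C 4 y + y 5 * pd C 5 y + y 6 * pd C 6 y - C y) := by
    filter_upwards [hU] with y hy
    have hy0 : y 2 ≠ 0 := ne_of_gt (lt_trans (by linarith) hy)
    have hys : y 2 - 2*M ≠ 0 := ne_of_gt (by linarith)
    simp only [hΨ, hPt, hPr, hPφ]
    field_simp
  have hsimp : HasFDerivAt
      (fun y : Fin 7 → ℝ => y 4 * pd C 4 y + y 5 * pd C 5 y + y 6 * pd C 6 y - C y) _ x :=
    ((((ContinuousLinearMap.proj 4 : (Fin 7 → ℝ) →L[ℝ] ℝ).hasFDerivAt.mul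
        (hpd 4).hasFDerivAt).add
      ((ContinuousLinearMap.proj 5 : (Fin 7 → ℝ) →L[ℝ] ℝ).hasFDerivAt.mul
        (hpd 5).hasFDerivAt)).add
      ((ContinuousLinearMap.proj 6 : (Fin 7 → ℝ) →L[ℝ] ℝ).hasFDerivAt.mul
        (hpd 6).hasFDerivAt)).sub
      (hC2.differentiableAt (by norm_num)).hasFDerivAt
  have hDΨ : Dtot Ψ x att arr aφ =
      (fderiv ℝ (fun y : Fin 7 → ℝ =>
        y 4 * pd C 4 y + y 5 * pd C 5 y + y 6 * pd C 6 y - C y) x)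
        ![1, x 4, x 5, x 6, att, arr, aφ] := by
    rw [Dtot, hev.fderiv_eq]
  -- expansion of fderiv C x along the total-derivative direction
  have hv : (![1, x 4, x 5, x 6, att, arr, aφ] : Fin 7 → ℝ) =
      (Pi.single 0 1 : Fin 7 → ℝ) + x 4 • (Pi.single 1 1 : Fin 7 → ℝ)
        + x 5 • (Pi.single 2 1 : Fin 7 → ℝ) + x 6 • (Pi.single 3 1 : Fin 7 → ℝ)
        + att • (Pi.single 4 1 : Fin 7 → ℝ) + arr • (Pi.single 5 1 : Fin 7 → ℝ)
        + aφ • (Pi.single 6 1 : Fin 7 → ℝ) := by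
    funext j
    fin_cases j <;> simp [Pi.single_apply] <;> rfl
  have hCv : (fderiv ℝ C x) ![1, x 4, x 5, x 6, att, arr, aφ] =
      pd C 0 x + x 4 * pd C 1 x + x 5 * pd C 2 x + x 6 * pd C 3 x
        + att * pd C 4 x + arr * pd C 5 x + aφ * pd C 6 x := by
    rw [hv]
    simp [pd, smul_eq_mul]
  have hc := hcons x hx
  simp only [Ft, Fr, Fφ] at hc
  rw [hDΨ, hsimp.fderiv, hPt, hPr, hPφ]
  rw [dtot_eq' hDPt, dtot_eq' hDPr, dtot_eq' hDPφ,
    pd_eq' hLag 1, pd_eq' hLag 2, pd_eq' hLag 3,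
    pd_eq' hLag 4, pd_eq' hLag 5, pd_eq' hLag 6]
  simp only [ContinuousLinearMap.add_apply, ContinuousLinearMap.sub_apply,
    ContinuousLinearMap.smul_apply, ContinuousLinearMap.proj_apply,
    ContinuousLinearMap.coe_smul', Pi.smul_apply, smul_eq_mul,
    Matrix.cons_val_zero, Matrix.cons_val_one, Matrix.head_cons,
    Pi.single_apply]
  rw [hCv]
  have m2 : (![1, x 4, x 5, x 6, att, arr, aφ] : Fin 7 → ℝ) 2 = x 5 := rfl
  have m4 : (![1, x 4, x 5, x 6, att, arr, aφ] : Fin 7 → ℝ) 4 = att := rfl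
  have m5 : (![1, x 4, x 5, x 6, att, arr, aφ] : Fin 7 → ℝ) 5 = arr := rfl
  have m6 : (![1, x 4, x 5, x 6, att, arr, aφ] : Fin 7 → ℝ) 6 = aφ := rfl
  rw [m2, m4, m5, m6]
  simp only [reduceIte, Fin.isValue, mul_one, mul_zero, zero_add, add_zero, pow_one,
    Nat.cast_ofNat]
  have hc0 : pd C 0 x = -(x 4 * pd C 1 x + x 5 * pd C 2 x + x 6 * pd C 3 x
      + (-(2 * M / (x 2 * (x 2 - 2 * M))) * x 4 * x 5) * pd C 4 x
      + (-(M * (x 2 - 2 * M) / (x 2) ^ 3) * (x 4) ^ 2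
          + (M / (x 2 * (x 2 - 2 * M))) * (x 5) ^ 2
          + (x 2 - 2 * M) * (x 6) ^ 2) * pd C 5 x
      + (-(2 / x 2) * x 5 * x 6) * pd C 6 x) := by linarith
  rw [hc0]
  set D4 := (fderiv ℝ (pd C 4) x) ![1, x 4, x 5, x 6, att, arr, aφ] with hD4
  set D5 := (fderiv ℝ (pd C 5) x) ![1, x 4, x 5, x 6, att, arr, aφ] with hD5
  set D6 := (fderiv ℝ (pd C 6) x) ![1, x 4, x 5, x 6, att, arr, aφ] with hD6
  set c1 := pd C 1 x; set c2 := pd C 2 x; set c3 := pd C 3 x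
  set c4 := pd C 4 x; set c5 := pd C 5 x; set c6 := pd C 6 x
  set r := x 2; set u := x 4; set w := x 5; set q := x 6
  have f1 : ((4:Fin 7) = 1) = False := by decide
  have f2 : ((2:Fin 7) = 1) = False := by decide
  have f3 : ((5:Fin 7) = 1) = False := by decide
  have f4 : ((6:Fin 7) = 1) = False := by decide
  have f5 : ((4:Fin 7) = 2) = False := by decide
  have f6 : ((5:Fin 7) = 2) = False := by decide
  have f7 : ((6:Fin 7) = 2) = False := by decide
  have f8 : ((4:Fin 7) = 3) = False := by decide
  have f9 : ((2:Fin 7) = 3) = False := by decide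
  have f10 : ((5:Fin 7) = 3) = False := by decide
  have f11 : ((6:Fin 7) = 3) = False := by decide
  have f12 : ((2:Fin 7) = 4) = False := by decide
  have f13 : ((5:Fin 7) = 4) = False := by decide
  have f14 : ((6:Fin 7) = 4) = False := by decide
  have f15 : ((4:Fin 7) = 5) = False := by decide
  have f16 : ((2:Fin 7) = 5) = False := by decide
  have f17 : ((6:Fin 7) = 5) = False := by decide
  have f18 : ((4:Fin 7) = 6) = False := by decide
  have f19 : ((2:Fin 7) = 6) = False := by decide
  have f20 : ((5:Fin 7) = 6) = False := by decide
  simp only [f1, f2, f3, f4, f5, f6, f7, f8, f9, f10, f11, f12, f13, f14, f15, f16, f17,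
    f18, f19, f20, if_false, Pi.neg_apply, mul_zero, mul_one, zero_add, add_zero, pow_one]
  field_simp
  ring
end
end

section
/- Let M > 0 and let (t, r, φ) be a twice-differentiable unit-norm solution of the equatorial geodesic equations of Schwarzschild spacetime on an open real interval I with r(τ) > 2M, constant energy E, constant angular momentum L, and r'(τ) > 0 on I. Let r₀ > 2M satisfy W(y) := E² − (1 − 2M/y)(1 + L²/y²) > 0 on the closed interval with endpoints r₀ and r(τ) for all τ ∈ I, and let Φ, T, 𝒯 be the constant values of the LRL angle, LRL time, and LRL proper-time of (t, r, φ) with base radius r₀. Fix ε ∈ ℝ and define on the interval I† = {τ : τ + Lε ∈ I} the functions t†(τ) = t(τ + Lε), r†(τ) = r(τ + Lε), φ†(τ) = φ(τ + Lε) + ε. Then (t†, r†, φ†) is a twice-differentiable unit-norm solution of the equatorial geodesic equations on I† with the same energy E and angular momentum L, and its LRL angle, LRL time, and LRL proper-time with base radius r₀ are the constants Φ† = Φ + ε, T† = T, and 𝒯† = 𝒯 − Lε. -/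
noncomputable section

/-- The symmetry transformation generated by the LRL angle's paired Killing
symmetry: the shifted solution `t†(τ) = t(τ+Lε)`, `r†(τ) = r(τ+Lε)`,
`φ†(τ) = φ(τ+Lε) + ε` is again a unit-norm geodesic with the same energy `E`
and angular momentum `L`, and its LRL quantities are
`Φ† = Φ + ε`, `T† = T`, `𝒯† = 𝒯 - Lε`. -/
theorem rotation_symmetry_action (M a b : ℝ) (hM : 0 < M)
    (t t' r r' φ φ' : ℝ → ℝ) (E L r₀ Φ T 𝒯 ε : ℝ)
    (hgeo : SchwGeo M (Set.Ioo a b) t t' r r' φ φ')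
    (hnorm : ∀ τ ∈ Set.Ioo a b,
      -((r τ - 2 * M) / r τ) * (t' τ) ^ 2 + (r τ / (r τ - 2 * M)) * (r' τ) ^ 2
        + (r τ) ^ 2 * (φ' τ) ^ 2 = -1)
    (hE : ∀ τ ∈ Set.Ioo a b, (1 - 2 * M / r τ) * t' τ = E)
    (hL : ∀ τ ∈ Set.Ioo a b, (r τ) ^ 2 * φ' τ = L)
    (hr' : ∀ τ ∈ Set.Ioo a b, 0 < r' τ)
    (hr₀ : 2 * M < r₀)
    (hW : ∀ τ ∈ Set.Ioo a b, ∀ y ∈ Set.uIcc r₀ (r τ), 0 < Weff M E L y)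
    (hΦ : ∀ τ ∈ Set.Ioo a b,
      φ τ - L * ∫ y in r₀..r τ, 1 / (y ^ 2 * Real.sqrt (Weff M E L y)) = Φ)
    (hT : ∀ τ ∈ Set.Ioo a b,
      t τ - E * ∫ y in r₀..r τ, y / ((y - 2 * M) * Real.sqrt (Weff M E L y)) = T)
    (h𝒯 : ∀ τ ∈ Set.Ioo a b,
      τ - ∫ y in r₀..r τ, 1 / Real.sqrt (Weff M E L y) = 𝒯) :
    SchwGeo M {τ : ℝ | τ + L * ε ∈ Set.Ioo a b}
        (fun τ => t (τ + L * ε)) (fun τ => t' (τ + L * ε))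
        (fun τ => r (τ + L * ε)) (fun τ => r' (τ + L * ε))
        (fun τ => φ (τ + L * ε) + ε) (fun τ => φ' (τ + L * ε)) ∧
    (∀ τ ∈ {τ : ℝ | τ + L * ε ∈ Set.Ioo a b},
      -((r (τ + L * ε) - 2 * M) / r (τ + L * ε)) * (t' (τ + L * ε)) ^ 2
        + (r (τ + L * ε) / (r (τ + L * ε) - 2 * M)) * (r' (τ + L * ε)) ^ 2
        + (r (τ + L * ε)) ^ 2 * (φ' (τ + L * ε)) ^ 2 = -1) ∧
    (∀ τ ∈ {τ : ℝ | τ + L * ε ∈ Set.Ioo a b},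
      (1 - 2 * M / r (τ + L * ε)) * t' (τ + L * ε) = E ∧
      (r (τ + L * ε)) ^ 2 * φ' (τ + L * ε) = L) ∧
    (∀ τ ∈ {τ : ℝ | τ + L * ε ∈ Set.Ioo a b},
      (φ (τ + L * ε) + ε)
        - L * ∫ y in r₀..r (τ + L * ε), 1 / (y ^ 2 * Real.sqrt (Weff M E L y))
      = Φ + ε) ∧
    (∀ τ ∈ {τ : ℝ | τ + L * ε ∈ Set.Ioo a b},
      t (τ + L * ε)
        - E * ∫ y in r₀..r (τ + L * ε), y / ((y - 2 * M) * Real.sqrt (Weff M E L y))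
      = T) ∧
    (∀ τ ∈ {τ : ℝ | τ + L * ε ∈ Set.Ioo a b},
      τ - ∫ y in r₀..r (τ + L * ε), 1 / Real.sqrt (Weff M E L y)
      = 𝒯 - L * ε) := by

  have hshift : ∀ τ : ℝ, HasDerivAt (fun σ : ℝ => σ + L * ε) 1 τ := fun τ =>
    (hasDerivAt_id τ).add_const (L * ε)
  have hcomp : ∀ (f : ℝ → ℝ) (d τ : ℝ), HasDerivAt f d (τ + L * ε) →
      HasDerivAt (fun σ => f (σ + L * ε)) d τ := by
    intro f d τ h
    have := h.comp τ (hshift τ); rw [mul_one] at this; exact this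
  refine ⟨?_, ?_, ?_, ?_, ?_, ?_⟩
  · intro τ hτ
    obtain ⟨h1, h2, h3, h4, h5, h6, h7⟩ := hgeo _ hτ
    exact ⟨h1, hcomp _ _ _ h2, hcomp _ _ _ h3,
      (hcomp _ _ _ h4).add_const ε, hcomp _ _ _ h5, hcomp _ _ _ h6, hcomp _ _ _ h7⟩
  · intro τ hτ; exact hnorm _ hτ
  · intro τ hτ; exact ⟨hE _ hτ, hL _ hτ⟩
  · intro τ hτ; have := hΦ _ hτ; linarith
  · intro τ hτ; exact hT _ hτ
  · intro τ hτ; have := h𝒯 _ hτ; linarith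
end
end

section
/- Let Ω ⊆ {(L̄, E) ∈ ℝ² : L̄ ≠ 0} be open and let u₀ : Ω → ℝ be differentiable, satisfying the turning-point cubic u₀³ − 2u₀² + (1 + L̄⁻²)u₀ − E² L̄⁻² = 0 identically on Ω, and assume 3u₀² − 4u₀ + 1 + L̄⁻² ≠ 0 on Ω. Then the following three identities hold on Ω: (a) L̄ (u₀ − 1)² u₀ ∂u₀/∂E + E ∂u₀/∂L̄ = 0; (b) (1 + L̄²(u₀ − 1)²) ∂u₀/∂L̄ + L̄ E (u₀ − 1)² ∂u₀/∂E = 0; (c) (E² − u₀) ∂u₀/∂E + L̄ E ∂u₀/∂L̄ = 0. -/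
noncomputable section

set_option maxHeartbeats 1000000 in
/-- Implicit-differentiation identities for a differentiable root `u₀(L̄, E)`
of the turning-point cubic `u₀³ - 2u₀² + (1 + L̄⁻²)u₀ - E² L̄⁻² = 0`:
the numerators of the commutator conserved quantities `C_{T,Φ}`, `C_{𝒯,Φ}`,
`C_{𝒯,T}` vanish. Points of `Ω` are pairs `p = (L̄, E)`. -/
theorem turning_point_commutator_numerators_vanish
    (Ω : Set (ℝ × ℝ)) (hΩ : IsOpen Ω) (hΩ0 : ∀ p ∈ Ω, p.1 ≠ 0)
    (u₀ : ℝ × ℝ → ℝ) (hdiff : ∀ p ∈ Ω, DifferentiableAt ℝ u₀ p)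
    (hcubic : ∀ p ∈ Ω,
      (u₀ p) ^ 3 - 2 * (u₀ p) ^ 2 + (1 + (p.1 ^ 2)⁻¹) * u₀ p
        - p.2 ^ 2 * (p.1 ^ 2)⁻¹ = 0)
    (hnd : ∀ p ∈ Ω,
      3 * (u₀ p) ^ 2 - 4 * u₀ p + 1 + (p.1 ^ 2)⁻¹ ≠ 0) :
    ∀ p ∈ Ω,
      p.1 * (u₀ p - 1) ^ 2 * u₀ p * fderiv ℝ u₀ p (0, 1)
          + p.2 * fderiv ℝ u₀ p (1, 0) = 0 ∧
      (1 + p.1 ^ 2 * (u₀ p - 1) ^ 2) * fderiv ℝ u₀ p (1, 0)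
          + p.1 * p.2 * (u₀ p - 1) ^ 2 * fderiv ℝ u₀ p (0, 1) = 0 ∧
      (p.2 ^ 2 - u₀ p) * fderiv ℝ u₀ p (0, 1)
          + p.1 * p.2 * fderiv ℝ u₀ p (1, 0) = 0 := by
  intro p hp
  have hL : p.1 ≠ 0 := hΩ0 p hp
  have hA := hnd p hp
  have hfd := (hdiff p hp).hasFDerivAt
  set L := p.1 with hLdef
  set E := p.2 with hEdef
  set u := u₀ p with hu
  set a := fderiv ℝ u₀ p (1, 0) with ha
  set b := fderiv ℝ u₀ p (0, 1) with hb
  -- L direction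
  have hline : HasDerivAt (fun t : ℝ => L + t) 1 0 := (hasDerivAt_id 0).const_add L
  have hγ : HasDerivAt (fun t : ℝ => ((L + t : ℝ), E)) ((1:ℝ), (0:ℝ)) 0 :=
    hline.prodMk (hasDerivAt_const 0 E)
  have hp0 : ((L + 0 : ℝ), E) = p := by simp [hLdef, hEdef]
  have hfd1 : HasFDerivAt u₀ (fderiv ℝ u₀ p) ((L + 0 : ℝ), E) := hp0 ▸ hfd
  have hφ : HasDerivAt (fun t : ℝ => u₀ (L + t, E)) a 0 :=
    hfd1.comp_hasDerivAt 0 hγ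
  have hsq : ((L + 0 : ℝ) ^ 2) ≠ 0 := by simp [hL]
  have hinv : HasDerivAt (fun t : ℝ => ((L + t) ^ 2)⁻¹)
      (-((2:ℕ) * (L + 0) ^ 1 * 1) / ((L + 0) ^ 2) ^ 2) 0 :=
    (hline.pow 2).inv hsq
  have hF : HasDerivAt (fun t : ℝ =>
      (u₀ (L + t, E)) ^ 3 - 2 * (u₀ (L + t, E)) ^ 2
        + (1 + ((L + t) ^ 2)⁻¹) * u₀ (L + t, E) - E ^ 2 * ((L + t) ^ 2)⁻¹)
      (((3:ℕ) * (u₀ (L + 0, E)) ^ 2 * a - 2 * ((2:ℕ) * (u₀ (L + 0, E)) ^ 1 * a))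
        + ((-((2:ℕ) * (L + 0) ^ 1 * 1) / ((L + 0) ^ 2) ^ 2) * u₀ (L + 0, E)
            + (1 + ((L + 0) ^ 2)⁻¹) * a)
        - E ^ 2 * (-((2:ℕ) * (L + 0) ^ 1 * 1) / ((L + 0) ^ 2) ^ 2)) 0 :=
    (((hφ.pow 3).sub ((hφ.pow 2).const_mul 2)).add
      ((hinv.const_add 1).mul hφ)).sub (hinv.const_mul (E ^ 2))
  have hnhds : ∀ᶠ t : ℝ in nhds 0, ((L + t : ℝ), E) ∈ Ω := by
    have hc : Continuous (fun t : ℝ => ((L + t : ℝ), E)) := by continuity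
    have := (hΩ.preimage hc).mem_nhds (by simpa [hp0] using hp : ((L + 0 : ℝ), E) ∈ Ω)
    exact this
  have hFeq : (fun t : ℝ =>
      (u₀ (L + t, E)) ^ 3 - 2 * (u₀ (L + t, E)) ^ 2
        + (1 + ((L + t) ^ 2)⁻¹) * u₀ (L + t, E) - E ^ 2 * ((L + t) ^ 2)⁻¹)
      =ᶠ[nhds (0:ℝ)] fun _ => 0 := by
    filter_upwards [hnhds] with t ht
    simpa using hcubic _ ht
  have hzero : HasDerivAt (fun t : ℝ =>
      (u₀ (L + t, E)) ^ 3 - 2 * (u₀ (L + t, E)) ^ 2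
        + (1 + ((L + t) ^ 2)⁻¹) * u₀ (L + t, E) - E ^ 2 * ((L + t) ^ 2)⁻¹) 0 0 :=
    (hasDerivAt_const (0:ℝ) (0:ℝ)).congr_of_eventuallyEq hFeq
  have hEa := hF.unique hzero
  rw [hp0] at hEa
  -- E direction
  have hline2 : HasDerivAt (fun t : ℝ => E + t) 1 0 := (hasDerivAt_id 0).const_add E
  have hδ : HasDerivAt (fun t : ℝ => (L, (E + t : ℝ))) ((0:ℝ), (1:ℝ)) 0 :=
    (hasDerivAt_const 0 L).prodMk hline2
  have hp1 : (L, (E + 0 : ℝ)) = p := by simp [hLdef, hEdef]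
  have hfd2 : HasFDerivAt u₀ (fderiv ℝ u₀ p) (L, (E + 0 : ℝ)) := hp1 ▸ hfd
  have hψ : HasDerivAt (fun t : ℝ => u₀ (L, E + t)) b 0 :=
    hfd2.comp_hasDerivAt 0 hδ
  have hG : HasDerivAt (fun t : ℝ =>
      (u₀ (L, E + t)) ^ 3 - 2 * (u₀ (L, E + t)) ^ 2
        + (1 + (L ^ 2)⁻¹) * u₀ (L, E + t) - (E + t) ^ 2 * (L ^ 2)⁻¹)
      (((3:ℕ) * (u₀ (L, E + 0)) ^ 2 * b - 2 * ((2:ℕ) * (u₀ (L, E + 0)) ^ 1 * b))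
        + (1 + (L ^ 2)⁻¹) * b
        - ((2:ℕ) * (E + 0) ^ 1 * 1) * (L ^ 2)⁻¹) 0 :=
    (((hψ.pow 3).sub ((hψ.pow 2).const_mul 2)).add
      (hψ.const_mul (1 + (L ^ 2)⁻¹))).sub ((hline2.pow 2).mul_const ((L ^ 2)⁻¹))
  have hnhds2 : ∀ᶠ t : ℝ in nhds 0, (L, (E + t : ℝ)) ∈ Ω := by
    have hc : Continuous (fun t : ℝ => (L, (E + t : ℝ))) := by continuity
    have := (hΩ.preimage hc).mem_nhds (by simpa [hp1] using hp : (L, (E + 0 : ℝ)) ∈ Ω)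
    exact this
  have hGeq : (fun t : ℝ =>
      (u₀ (L, E + t)) ^ 3 - 2 * (u₀ (L, E + t)) ^ 2
        + (1 + (L ^ 2)⁻¹) * u₀ (L, E + t) - (E + t) ^ 2 * (L ^ 2)⁻¹)
      =ᶠ[nhds (0:ℝ)] fun _ => 0 := by
    filter_upwards [hnhds2] with t ht
    simpa using hcubic _ ht
  have hzero2 : HasDerivAt (fun t : ℝ =>
      (u₀ (L, E + t)) ^ 3 - 2 * (u₀ (L, E + t)) ^ 2
        + (1 + (L ^ 2)⁻¹) * u₀ (L, E + t) - (E + t) ^ 2 * (L ^ 2)⁻¹) 0 0 :=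
    (hasDerivAt_const (0:ℝ) (0:ℝ)).congr_of_eventuallyEq hGeq
  have hEb := hG.unique hzero2
  rw [hp1] at hEb
  have hc := hcubic p hp
  simp only [← hu, ← hLdef, ← hEdef] at hEa hEb hc hA ⊢
  push_cast at hEa hEb
  simp only [add_zero, pow_one, mul_one] at hEa hEb
  field_simp at hEa hEb hc
  have hEa' : ((3*u^2-4*u)*L^2 + L^2 + 1)*(a*L) - 2*u + 2*E^2 = 0 := by
    have h7 : (L:ℝ)^7 ≠ 0 := pow_ne_zero _ hL
    apply mul_left_cancel₀ h7
    rw [mul_zero]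
    linear_combination L^7 * hEa
  have hEb' : ((3*u^2-4*u)*L^2 + L^2 + 1)*b - 2*E = 0 := by linear_combination hEb
  have hP : (3*u^2-4*u)*L^2 + L^2 + 1 ≠ 0 := by
    intro h
    apply hA
    have hL2 : (L:ℝ)^2 ≠ 0 := pow_ne_zero _ hL
    field_simp
    linear_combination h
  have hPL : ((3*u^2-4*u)*L^2 + L^2 + 1) * L ≠ 0 := mul_ne_zero hP hL
  refine ⟨?_, ?_, ?_⟩
  · apply mul_left_cancel₀ hPL
    rw [mul_zero]
    linear_combination (L^2*(u-1)^2*u)*hEb' + E*hEa' + 2*E*hc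
  · apply mul_left_cancel₀ hPL
    rw [mul_zero]
    linear_combination (1+L^2*(u-1)^2)*hEa' + (L^2*E*(u-1)^2)*hEb' + 2*hc
  · apply mul_left_cancel₀ hPL
    rw [mul_zero]
    linear_combination L*(E^2-u)*hEb' + L*E*hEa'
end
end

section
/- Let M > 0 and let (t, r, φ) be a twice-differentiable unit-norm solution of the equatorial geodesic equations of Schwarzschild spacetime on an open real interval I with r(τ) > 2M, constant energy E, constant angular momentum L, and r'(τ) > 0 on I; set J = r(I) and s = sup J. Let ε ∈ ℝ, set W(y) = E² − (1 − 2M/y)(1 + L²/y²) and W†(y) = E² − (1 − 2M/y)(1 + (L − ε)²/y²). Assume: r₀ ∈ (2M, inf J) with W(r₀) = 0, W > 0 on (r₀, s), and y ↦ 1/√W(y) is integrable on (r₀, inf J]; and r₀† ∈ (2M, inf J) with W†(r₀†) = 0, W† > 0 on (r₀†, s), and y ↦ 1/√W†(y) is integrable on (r₀†, inf J]. Let Φ, T, 𝒯 be the constant LRL quantities of (t, r, φ) with base radius r₀. Then there exists a twice-differentiable unit-norm solution (t†, r†, φ†) of the equatorial geodesic equations on an open interval I†, with energy E, angular momentum L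 − ε, (r†)' > 0 on I†, and r†(I†) = J, whose LRL angle, LRL time, and LRL proper-time with base radius r₀† are the constants Φ† = Φ, T† = T, and 𝒯† = 𝒯. -/
noncomputable section

open Set MeasureTheory Filter Topology

lemma weff_continuousOn (M E l : ℝ) {S : Set ℝ} (hS : ∀ y ∈ S, y ≠ 0) :
    ContinuousOn (Weff M E l) S := by
  unfold Weff
  apply ContinuousOn.sub continuousOn_const
  apply ContinuousOn.mul
  · exact ContinuousOn.sub continuousOn_const
      (ContinuousOn.div continuousOn_const continuousOn_id hS)
  · exact ContinuousOn.add continuousOn_const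
      (ContinuousOn.div continuousOn_const (continuousOn_pow 2)
        (fun y hy => pow_ne_zero 2 (hS y hy)))

def Pc (A M l y : ℝ) : ℝ := A*y^3 + 2*M*y^2 - l^2*y + 2*M*l^2

def Qc (A M l s y : ℝ) : ℝ := A*(y^2+s*y+s^2) + 2*M*(y+s) - l^2

lemma pc_fac (A M l s y : ℝ) : Pc A M l y = Pc A M l s + (y - s) * Qc A M l s y := by
  unfold Pc Qc; ring

lemma pc_continuous (A M l : ℝ) : Continuous (Pc A M l) := by
  unfold Pc; fun_prop

lemma qc_continuous (A M l s : ℝ) : Continuous (Qc A M l s) := by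
  unfold Qc; fun_prop

lemma weff_eq_pcub (M E l : ℝ) {y : ℝ} (hy : 0 < y) :
    Weff M E l y = Pc (E^2-1) M l y / y^3 := by
  unfold Weff Pc
  have : y ≠ 0 := ne_of_gt hy
  field_simp; ring

/-- double root at `s` is impossible -/
lemma double_root_contradiction {A M l r0 s y0 : ℝ} (hM : 0 < M) (hr0 : 0 < r0)
    (hr0y : r0 < y0) (hy0s : y0 < s)
    (h2 : l^2 = 3*A*s^2 + 4*M*s)
    (h4 : 2*M*l^2 = (2*A*s + 2*M)*s^2)
    (hPr0 : Pc A M l r0 = 0)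
    (hPy0 : 0 < Pc A M l y0) : False := by
  have hs0 : 0 < s := by linarith
  unfold Pc at hPr0 hPy0
  have hfacr : (r0 - s)^2 * (A*r0 + 2*M + 2*A*s) = 0 := by
    linear_combination hPr0 + r0 * h2 - h4
  have hrs : r0 - s ≠ 0 := by intro h'; nlinarith
  have hlin : A*r0 + 2*M + 2*A*s = 0 :=
    (mul_eq_zero.1 hfacr).resolve_left (pow_ne_zero 2 hrs)
  have hfacy : A*y0^3 + 2*M*y0^2 - l^2*y0 + 2*M*l^2
      = (y0 - s)^2 * (A*y0 + 2*M + 2*A*s) := by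
    linear_combination -y0 * h2 + h4
  rw [hfacy] at hPy0
  have hys2 : (0:ℝ) < (y0 - s)^2 := by
    have : y0 - s ≠ 0 := by intro h'; nlinarith
    positivity
  have h5 : 0 < A*y0 + 2*M + 2*A*s := by nlinarith
  have hApos : 0 < A := by
    rcases le_or_gt A 0 with hA | hA
    · exfalso
      have : A*y0 ≤ A*r0 := mul_le_mul_of_nonpos_left (le_of_lt hr0y) hA
      linarith
    · exact hA
  nlinarith [mul_pos hApos hr0, mul_pos hApos hs0]

/-- key lower bound near the outer radius `s` -/
lemma weff_lower_bound {M E l r0 c s : ℝ} (hM : 0 < M) (h2M : 2*M < r0)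
    (hr0c : r0 < c) (hcs : c < s) (hW0 : Weff M E l r0 = 0)
    (hWpos : ∀ y, r0 < y → y < s → 0 < Weff M E l y) :
    ∃ κ > 0, ∀ y ∈ Ico c s, κ * (s - y) ≤ Weff M E l y := by
  have hr0 : 0 < r0 := by linarith
  have hc0 : 0 < c := by linarith
  have hs0 : 0 < s := by linarith
  have hPpos : ∀ y, c ≤ y → y < s → 0 < Pc (E^2-1) M l y := by
    intro y hy1 hy2
    have h0 : 0 < y := lt_of_lt_of_le hc0 hy1
    have hw := hWpos y (by linarith) hy2
    rw [weff_eq_pcub M E l h0] at hw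
    have h3 : (0:ℝ) < y^3 := by positivity
    have : 0 < (Pc (E^2-1) M l y / y^3) * y^3 := mul_pos hw h3
    rwa [div_mul_cancel₀ _ (ne_of_gt h3)] at this
  haveI hnb : (𝓝[Ioo c s] s).NeBot := by
    refine mem_closure_iff_nhdsWithin_neBot.1 ?_
    rw [closure_Ioo (ne_of_lt hcs)]; exact ⟨le_of_lt hcs, le_refl s⟩
  have hPs : 0 ≤ Pc (E^2-1) M l s := by
    refine ge_of_tendsto ((pc_continuous (E^2-1) M l).continuousAt.continuousWithinAt
      (s := Ioo c s)) ?_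
    filter_upwards [self_mem_nhdsWithin] with y hy
    exact le_of_lt (hPpos y (le_of_lt hy.1) hy.2)
  rcases eq_or_lt_of_le hPs with hPs0 | hPs0
  · -- P s = 0 : factor out (y - s)
    have hQneg : ∀ y, c ≤ y → y < s → Qc (E^2-1) M l s y < 0 := by
      intro y hy1 hy2
      have h1 : 0 < Pc (E^2-1) M l y := hPpos y hy1 hy2
      have h2 := pc_fac (E^2-1) M l s y
      rw [← hPs0] at h2
      nlinarith
    have hQs_le : Qc (E^2-1) M l s s ≤ 0 := by
      refine le_of_tendsto ((qc_continuous (E^2-1) M l s).continuousAt.continuousWithinAt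
        (s := Ioo c s)) ?_
      filter_upwards [self_mem_nhdsWithin] with y hy
      exact le_of_lt (hQneg y (le_of_lt hy.1) hy.2)
    have hQs : Qc (E^2-1) M l s s < 0 := by
      rcases eq_or_lt_of_le hQs_le with h | h
      swap; · exact h
      exfalso
      have h2 : l^2 = 3*(E^2-1)*s^2 + 4*M*s := by
        have h' : (E^2-1)*(s^2+s*s+s^2) + 2*M*(s+s) - l^2 = 0 := h
        linear_combination -h'
      have hPseq : Pc (E^2-1) M l s = 0 := hPs0.symm
      have h4 : 2*M*l^2 = (2*(E^2-1)*s + 2*M)*s^2 := by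
        unfold Pc at hPseq
        linear_combination hPseq + s * h2
      have hPr0 : Pc (E^2-1) M l r0 = 0 := by
        have hWr0 := hW0
        rw [weff_eq_pcub M E l hr0] at hWr0
        have h3 : (0:ℝ) < r0^3 := by positivity
        exact (div_eq_zero_iff.1 hWr0).resolve_right (by positivity)
      exact double_root_contradiction hM hr0 (show r0 < (c+s)/2 by linarith)
        (show (c+s)/2 < s by linarith) h2 h4 hPr0
        (hPpos ((c+s)/2) (by linarith) (by linarith))
    -- now −Q has a positive min on [c,s]
    obtain ⟨y₁, hy₁, hmin⟩ := isCompact_Icc.exists_isMinOn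
      (Set.nonempty_Icc.2 (le_of_lt hcs))
      ((qc_continuous (E^2-1) M l s).neg.continuousOn (s := Icc c s))
    have hy₁pos : 0 < -Qc (E^2-1) M l s y₁ := by
      rcases eq_or_lt_of_le hy₁.2 with h | h
      · rw [h]; linarith
      · have := hQneg y₁ hy₁.1 h; linarith
    refine ⟨(-Qc (E^2-1) M l s y₁) / s^3, by positivity, ?_⟩
    intro y hy
    have h0 : 0 < y := lt_of_lt_of_le hc0 hy.1
    have hys : 0 ≤ s - y := by linarith [hy.2]
    rw [weff_eq_pcub M E l h0, pc_fac (E^2-1) M l s y, ← hPs0]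
    have hQy : -Qc (E^2-1) M l s y₁ ≤ -Qc (E^2-1) M l s y := hmin ⟨hy.1, le_of_lt hy.2⟩
    have hy3 : (0:ℝ) < y^3 := by positivity
    have hy3s : y^3 ≤ s^3 := pow_le_pow_left₀ (le_of_lt h0) (le_of_lt hy.2) 3
    have key : (-Qc (E^2-1) M l s y₁) / s^3 ≤ (-Qc (E^2-1) M l s y) / y^3 :=
      div_le_div₀ (le_of_lt (lt_of_lt_of_le hy₁pos hQy)) hQy hy3 hy3s
    calc (-Qc (E^2-1) M l s y₁) / s^3 * (s - y)
        ≤ (-Qc (E^2-1) M l s y) / y^3 * (s - y) := mul_le_mul_of_nonneg_right key hys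
    _ = (0 + (y - s) * Qc (E^2-1) M l s y) / y^3 := by field_simp; ring
  · -- P s > 0 : W has a positive min on [c,s]
    have hWpos' : ∀ y ∈ Icc c s, 0 < Weff M E l y := by
      intro y hy
      rcases eq_or_lt_of_le hy.2 with h | h
      · rw [h, weff_eq_pcub M E l hs0]; positivity
      · exact hWpos y (by linarith [hy.1]) h
    obtain ⟨y₁, hy₁, hmin⟩ := isCompact_Icc.exists_isMinOn
      (Set.nonempty_Icc.2 (le_of_lt hcs))
      (weff_continuousOn M E l (fun y hy => by
        have : 0 < y := lt_of_lt_of_le hc0 hy.1; linarith))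
    have hWy₁ : 0 < Weff M E l y₁ := hWpos' y₁ hy₁
    refine ⟨Weff M E l y₁ / (s - c), by
      have h3 : (0:ℝ) < s - c := by linarith
      positivity, ?_⟩
    intro y hy
    have h1 : Weff M E l y₁ ≤ Weff M E l y := hmin ⟨hy.1, le_of_lt hy.2⟩
    have h2 : s - y ≤ s - c := by linarith [hy.1]
    have h3 : (0:ℝ) < s - c := by linarith
    calc Weff M E l y₁ / (s-c) * (s-y) ≤ Weff M E l y₁ / (s-c) * (s-c) :=
          mul_le_mul_of_nonneg_left h2 (le_of_lt (by positivity))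
    _ = Weff M E l y₁ := by field_simp
    _ ≤ Weff M E l y := h1

lemma weff_sqrt_integrable_Ioo {M E l r0 c s : ℝ} (hM : 0 < M) (h2M : 2*M < r0)
    (hr0c : r0 < c) (hcs : c < s) (hW0 : Weff M E l r0 = 0)
    (hWpos : ∀ y, r0 < y → y < s → 0 < Weff M E l y) :
    IntegrableOn (fun y => 1 / Real.sqrt (Weff M E l y)) (Ioo c s) := by
  obtain ⟨κ, hκ, hbound⟩ := weff_lower_bound hM h2M hr0c hcs hW0 hWpos
  have hc0 : 0 < c := by linarith
  -- dominating function
  have h1 : IntervalIntegrable (fun x : ℝ => x ^ (-(1/2):ℝ)) volume (s - c) (s - s) :=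
    intervalIntegral.intervalIntegrable_rpow' (by norm_num)
  have h2 := h1.comp_sub_left s
  rw [show s - (s - c) = c by ring, show s - (s - s) = s by ring] at h2
  have h3 : IntegrableOn (fun x : ℝ => (s - x) ^ (-(1/2):ℝ)) (Ioc c s) := h2.1
  have hgint : IntegrableOn
      (fun y => (Real.sqrt κ)⁻¹ * (s - y) ^ (-(1/2) : ℝ)) (Ioo c s) := by
    exact ((h3.mono_set Ioo_subset_Ioc_self).const_mul _)
  apply Integrable.mono' hgint
  · -- measurability
    apply ContinuousOn.aestronglyMeasurable _ measurableSet_Ioo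
    apply ContinuousOn.div continuousOn_const
    · exact Real.continuous_sqrt.comp_continuousOn
        (weff_continuousOn M E l (fun y hy => by
          have : c < y := hy.1; intro h'; rw [h'] at this; linarith))
    · intro y hy
      have hW : 0 < Weff M E l y := hWpos y (by linarith [hy.1]) hy.2
      exact ne_of_gt (Real.sqrt_pos.2 hW)
  · rw [ae_restrict_iff' measurableSet_Ioo]
    filter_upwards with y hy
    have hW : 0 < Weff M E l y := hWpos y (by linarith [hy.1]) hy.2
    have hsy : 0 < s - y := by linarith [hy.2]
    have hb := hbound y ⟨le_of_lt hy.1, hy.2⟩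
    have hsq : Real.sqrt (κ * (s - y)) ≤ Real.sqrt (Weff M E l y) :=
      Real.sqrt_le_sqrt hb
    have hsqpos : 0 < Real.sqrt (κ * (s - y)) := Real.sqrt_pos.2 (by positivity)
    have h6 : ‖1 / Real.sqrt (Weff M E l y)‖ = 1 / Real.sqrt (Weff M E l y) := by
      rw [Real.norm_eq_abs, abs_of_nonneg]; positivity
    rw [h6]
    have h7 : 1 / Real.sqrt (Weff M E l y) ≤ 1 / Real.sqrt (κ * (s - y)) :=
      one_div_le_one_div_of_le hsqpos hsq
    refine le_trans h7 (le_of_eq ?_)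
    rw [Real.sqrt_mul (le_of_lt hκ), Real.sqrt_eq_rpow (s - y),
      Real.rpow_neg (le_of_lt hsy), one_div, mul_inv]


set_option maxHeartbeats 2000000 in
theorem construct_geodesic {M E l r0 c s Φ T 𝒯 : ℝ} (hM : 0 < M) (h2M : 2*M < r0)
    (hr0c : r0 < c) (hcs : c < s)
    (hW0 : Weff M E l r0 = 0)
    (hWpos : ∀ y, r0 < y → y < s → 0 < Weff M E l y)
    (hint : IntegrableOn (fun y => 1 / Real.sqrt (Weff M E l y)) (Set.Ioc r0 c)) :
    ∃ (ad bd : ℝ) (td td' rd rd' φd φd' : ℝ → ℝ),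
      SchwGeo M (Set.Ioo ad bd) td td' rd rd' φd φd' ∧
      (∀ τ ∈ Set.Ioo ad bd,
        -((rd τ - 2 * M) / rd τ) * (td' τ) ^ 2
          + (rd τ / (rd τ - 2 * M)) * (rd' τ) ^ 2
          + (rd τ) ^ 2 * (φd' τ) ^ 2 = -1) ∧
      (∀ τ ∈ Set.Ioo ad bd, (1 - 2 * M / rd τ) * td' τ = E) ∧
      (∀ τ ∈ Set.Ioo ad bd, (rd τ) ^ 2 * φd' τ = l) ∧
      (∀ τ ∈ Set.Ioo ad bd, 0 < rd' τ) ∧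
      rd '' Set.Ioo ad bd = Set.Ioo c s ∧
      (∀ τ ∈ Set.Ioo ad bd,
        φd τ - l * ∫ y in r0..rd τ,
          1 / (y ^ 2 * Real.sqrt (Weff M E l y)) = Φ) ∧
      (∀ τ ∈ Set.Ioo ad bd,
        td τ - E * ∫ y in r0..rd τ,
          y / ((y - 2 * M) * Real.sqrt (Weff M E l y)) = T) ∧
      (∀ τ ∈ Set.Ioo ad bd,
        τ - ∫ y in r0..rd τ, 1 / Real.sqrt (Weff M E l y) = 𝒯) := by
  classical
  have hr00 : 0 < r0 := by linarith
  have hc0 : 0 < c := by linarith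
  have hs0 : 0 < s := by linarith
  have hc2M : 2*M < c := by linarith
  -- continuity pack on U := Ioo r0 s
  have hWcont : ContinuousOn (Weff M E l) (Ioo r0 s) :=
    weff_continuousOn M E l (fun y hy => ne_of_gt (by linarith [hy.1]))
  have hsqcont : ContinuousOn (fun y => Real.sqrt (Weff M E l y)) (Ioo r0 s) :=
    Real.continuous_sqrt.comp_continuousOn hWcont
  have hsqne : ∀ y ∈ Ioo r0 s, Real.sqrt (Weff M E l y) ≠ 0 :=
    fun y hy => ne_of_gt (Real.sqrt_pos.2 (hWpos y hy.1 hy.2))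
  have hgcont : ContinuousOn (fun y => 1 / Real.sqrt (Weff M E l y)) (Ioo r0 s) :=
    ContinuousOn.div continuousOn_const hsqcont hsqne
  have hgφcont : ContinuousOn (fun y => 1 / (y^2 * Real.sqrt (Weff M E l y))) (Ioo r0 s) :=
    ContinuousOn.div continuousOn_const ((continuousOn_pow 2).mul hsqcont)
      (fun y hy => mul_ne_zero (pow_ne_zero 2 (ne_of_gt (by linarith [hy.1]))) (hsqne y hy))
  have hgtcont : ContinuousOn (fun y => y / ((y - 2*M) * Real.sqrt (Weff M E l y))) (Ioo r0 s) :=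
    ContinuousOn.div continuousOn_id ((continuousOn_id.sub continuousOn_const).mul hsqcont)
      (fun y hy => mul_ne_zero (ne_of_gt (by linarith [hy.1])) (hsqne y hy))
  have hgpos : ∀ y, r0 < y → y < s → 0 < 1 / Real.sqrt (Weff M E l y) :=
    fun y h1 h2 => div_pos one_pos (Real.sqrt_pos.2 (hWpos y h1 h2))
  have hgnonneg : ∀ y : ℝ, 0 ≤ 1 / Real.sqrt (Weff M E l y) :=
    fun y => by positivity
  -- integrability pack
  have hsub : ∀ ρ₁ ρ₂ : ℝ, c ≤ ρ₁ → ρ₁ < s → c ≤ ρ₂ → ρ₂ < s →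
      Set.uIcc ρ₁ ρ₂ ⊆ Ioo r0 s := by
    intro ρ₁ ρ₂ h1 h2 h3 h4 x hx
    rcases le_total ρ₁ ρ₂ with h | h
    · rw [Set.uIcc_of_le h] at hx; exact ⟨by linarith [hx.1], lt_of_le_of_lt hx.2 h4⟩
    · rw [Set.uIcc_of_ge h] at hx
      exact ⟨by linarith [hx.1], lt_of_le_of_lt hx.2 h2⟩
  have hIImid : ∀ (f : ℝ → ℝ), ContinuousOn f (Ioo r0 s) →
      ∀ ρ₁ ρ₂, c ≤ ρ₁ → ρ₁ < s → c ≤ ρ₂ → ρ₂ < s → IntervalIntegrable f volume ρ₁ ρ₂ := by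
    intro f hf ρ₁ ρ₂ h1 h2 h3 h4
    exact (hf.mono (hsub ρ₁ ρ₂ h1 h2 h3 h4)).intervalIntegrable
  have hII : ∀ (f : ℝ → ℝ), ContinuousOn f (Ioo r0 s) → IntegrableOn f (Set.Ioc r0 c) →
      ∀ ρ, c ≤ ρ → ρ < s → IntervalIntegrable f volume r0 ρ := by
    intro f hf hfc ρ h1 h2
    constructor
    · have hsplit : Set.Ioc r0 ρ = Set.Ioc r0 c ∪ Set.Ioc c ρ :=
        (Set.Ioc_union_Ioc_eq_Ioc (le_of_lt hr0c) h1).symm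
      rw [hsplit]
      refine hfc.union ?_
      refine IntegrableOn.mono_set ?_ Set.Ioc_subset_Icc_self
      refine (hf.mono ?_).integrableOn_Icc
      intro x hx; exact ⟨by linarith [hx.1], lt_of_le_of_lt hx.2 h2⟩
    · rw [Set.Ioc_eq_empty (by push_neg; linarith)]
      exact integrableOn_empty
  -- comparison on (r0, c] for the other two integrands
  have hcomp : ∀ (f : ℝ → ℝ) (C : ℝ), ContinuousOn f (Ioo r0 s) →
      (∀ y ∈ Set.Ioc r0 c, ‖f y‖ ≤ C * (1 / Real.sqrt (Weff M E l y))) →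
      IntegrableOn f (Set.Ioc r0 c) := by
    intro f C hf hb
    refine Integrable.mono' (hint.const_mul C)
      ((hf.mono ?_).aestronglyMeasurable measurableSet_Ioc) ?_
    · intro x hx; exact ⟨hx.1, by linarith [hx.2]⟩
    · rw [ae_restrict_iff' measurableSet_Ioc]
      filter_upwards with y hy
      exact hb y hy
  have hgφIocc : IntegrableOn (fun y => 1 / (y^2 * Real.sqrt (Weff M E l y)))
      (Set.Ioc r0 c) := by
    refine hcomp _ (1/r0^2) hgφcont ?_
    intro y hy
    have hy0 : 0 < y := lt_trans hr00 hy.1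
    have hW : 0 < Weff M E l y := hWpos y hy.1 (by linarith [hy.2])
    have hsq : 0 < Real.sqrt (Weff M E l y) := Real.sqrt_pos.2 hW
    have h1 : ‖1 / (y^2 * Real.sqrt (Weff M E l y))‖
        = 1 / (y^2 * Real.sqrt (Weff M E l y)) := by
      rw [Real.norm_eq_abs, abs_of_nonneg]; positivity
    rw [h1, show (1/r0^2) * (1 / Real.sqrt (Weff M E l y))
        = 1 / (r0^2 * Real.sqrt (Weff M E l y)) from by
          rw [div_mul_div_comm, one_mul]]
    apply one_div_le_one_div_of_le (by positivity)
    have : r0^2 ≤ y^2 := pow_le_pow_left₀ (le_of_lt hr00) (le_of_lt hy.1) 2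
    nlinarith [hsq]
  have hgtIocc : IntegrableOn (fun y => y / ((y - 2*M) * Real.sqrt (Weff M E l y)))
      (Set.Ioc r0 c) := by
    refine hcomp _ (c/(r0 - 2*M)) hgtcont ?_
    intro y hy
    have hy0 : 0 < y := lt_trans hr00 hy.1
    have hy2M : 0 < y - 2*M := by linarith [hy.1]
    have hW : 0 < Weff M E l y := hWpos y hy.1 (by linarith [hy.2])
    have hsq : 0 < Real.sqrt (Weff M E l y) := Real.sqrt_pos.2 hW
    have h1 : ‖y / ((y - 2*M) * Real.sqrt (Weff M E l y))‖
        = y / ((y - 2*M) * Real.sqrt (Weff M E l y)) := by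
      rw [Real.norm_eq_abs, abs_of_nonneg]; positivity
    rw [h1, show (c/(r0-2*M)) * (1 / Real.sqrt (Weff M E l y))
        = c / ((r0-2*M) * Real.sqrt (Weff M E l y)) from by
          rw [div_mul_div_comm, mul_one]]
    apply div_le_div₀ (by positivity) hy.2 (mul_pos (by linarith) hsq)
    exact mul_le_mul_of_nonneg_right (by linarith [hy.1]) (le_of_lt hsq)
  -- the proper-time primitive F
  set F : ℝ → ℝ := fun ρ => 𝒯 + ∫ y in r0..ρ, 1 / Real.sqrt (Weff M E l y) with hFdef
  have hFd : ∀ ρ ∈ Ioo c s, HasDerivAt F (1 / Real.sqrt (Weff M E l ρ)) ρ := by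
    intro ρ hρ
    have hρU : ρ ∈ Ioo r0 s := ⟨lt_trans hr0c hρ.1, hρ.2⟩
    have h1 := intervalIntegral.integral_hasDerivAt_right
      (hII _ hgcont hint ρ (le_of_lt hρ.1) hρ.2)
      (hgcont.stronglyMeasurableAtFilter isOpen_Ioo ρ hρU)
      (hgcont.continuousAt (isOpen_Ioo.mem_nhds hρU))
    exact h1.const_add 𝒯
  have hFmono : ∀ ρ₁, c ≤ ρ₁ → ∀ ρ₂, ρ₂ < s → ρ₁ < ρ₂ → F ρ₁ < F ρ₂ := by
    intro ρ₁ h1 ρ₂ h2 h12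
    have hII₁ := hII _ hgcont hint ρ₁ h1 (lt_trans h12 h2)
    have hIImid' := hIImid _ hgcont ρ₁ ρ₂ h1 (lt_trans h12 h2) (by linarith) h2
    have hadd := intervalIntegral.integral_add_adjacent_intervals hII₁ hIImid'
    have hpos : 0 < ∫ y in ρ₁..ρ₂, 1 / Real.sqrt (Weff M E l y) := by
      apply intervalIntegral.intervalIntegral_pos_of_pos_on hIImid' _ h12
      intro x hx
      exact hgpos x (by linarith [hx.1]) (by linarith [hx.2])
    simp only [hFdef]
    rw [← hadd]
    linarith
  -- upper bound for F on (c,s)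
  have hgIoo : IntegrableOn (fun y => 1 / Real.sqrt (Weff M E l y)) (Ioo c s) :=
    weff_sqrt_integrable_Ioo hM h2M hr0c hcs hW0 hWpos
  have hgTot : IntegrableOn (fun y => 1 / Real.sqrt (Weff M E l y)) (Ioo r0 s) := by
    rw [← Set.Ioc_union_Ioo_eq_Ioo (le_of_lt hr0c) hcs]
    exact hint.union hgIoo
  have hFsplit : ∀ ρ, r0 ≤ ρ →
      F ρ = 𝒯 + ∫ y in Set.Ioc r0 ρ, 1 / Real.sqrt (Weff M E l y) := by
    intro ρ h1
    simp only [hFdef]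
    rw [intervalIntegral.integral_of_le h1]
  have hFbdd : BddAbove (F '' Ioo c s) := by
    refine ⟨𝒯 + ∫ y in Ioo r0 s, 1 / Real.sqrt (Weff M E l y), ?_⟩
    rintro x ⟨ρ, hρ, rfl⟩
    rw [hFsplit ρ (by linarith [hρ.1])]
    have hmono := MeasureTheory.setIntegral_mono_set hgTot
      (by filter_upwards with y using hgnonneg y)
      (HasSubset.Subset.eventuallyLE (show Set.Ioc r0 ρ ⊆ Set.Ioo r0 s from
        fun x hx => ⟨hx.1, lt_of_le_of_lt hx.2 hρ.2⟩))
    linarith [hmono]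
  set bd : ℝ := sSup (F '' Ioo c s) with hbddef
  have hmidcs : (c+s)/2 ∈ Ioo c s := ⟨by linarith, by linarith⟩
  have hFlt : ∀ ρ ∈ Ioo c s, F ρ < bd := by
    intro ρ hρ
    have hmid : (ρ+s)/2 ∈ Ioo c s := ⟨by linarith [hρ.1], by linarith [hρ.2]⟩
    have h1 : F ρ < F ((ρ+s)/2) :=
      hFmono ρ (le_of_lt hρ.1) _ hmid.2 (by linarith [hρ.2])
    exact lt_of_lt_of_le h1 (le_csSup hFbdd (mem_image_of_mem F hmid))
  have had_lt : ∀ ρ ∈ Ioo c s, F c < F ρ :=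
    fun ρ hρ => hFmono c le_rfl ρ hρ.2 hρ.1
  have hadbd : F c < bd := lt_trans (had_lt _ hmidcs) (hFlt _ hmidcs)
  -- continuity of F on [c, ρ'] and surjectivity via IVT
  have hFcontIcc : ∀ ρ', c ≤ ρ' → ρ' < s → ContinuousOn F (Set.Icc c ρ') := by
    intro ρ' h1 h2
    have hgIcc : IntegrableOn (fun y => 1 / Real.sqrt (Weff M E l y)) (Set.Icc c ρ') := by
      refine (hgcont.mono ?_).integrableOn_Icc
      intro x hx; exact ⟨lt_of_lt_of_le hr0c hx.1, lt_of_le_of_lt hx.2 h2⟩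
    have hprim := intervalIntegral.continuousOn_primitive hgIcc
    refine ContinuousOn.congr (ContinuousOn.add
      (continuousOn_const (c := 𝒯 + ∫ y in r0..c, 1 / Real.sqrt (Weff M E l y)))
      hprim) ?_
    intro x hx
    have hIIc := hII _ hgcont hint c le_rfl hcs
    have hIIcx := hIImid _ hgcont c x le_rfl hcs hx.1 (lt_of_le_of_lt hx.2 h2)
    have hadd := intervalIntegral.integral_add_adjacent_intervals hIIc hIIcx
    simp only [hFdef]
    rw [← hadd, intervalIntegral.integral_of_le hx.1]
    simp only [Pi.add_apply, one_div]
    ring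
  have hsurj : ∀ σ ∈ Ioo (F c) bd, ∃ ρ ∈ Ioo c s, F ρ = σ := by
    intro σ hσ
    obtain ⟨x, hx, hσx⟩ := exists_lt_of_lt_csSup
      (Set.Nonempty.image F ⟨(c+s)/2, hmidcs⟩) hσ.2
    obtain ⟨ρ', hρ', rfl⟩ := hx
    have h1 : c ≤ ρ' := le_of_lt hρ'.1
    obtain ⟨ρ, hρIcc, hFρ⟩ := intermediate_value_Icc h1 (hFcontIcc ρ' h1 hρ'.2)
      ⟨le_of_lt hσ.1, le_of_lt hσx⟩
    refine ⟨ρ, ⟨?_, lt_of_le_of_lt hρIcc.2 hρ'.2⟩, hFρ⟩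
    rcases eq_or_lt_of_le hρIcc.1 with h | h
    · exfalso; rw [← h] at hFρ; exact absurd hFρ (ne_of_lt hσ.1)
    · exact h
  have hFinj : ∀ ρ₁ ∈ Ioo c s, ∀ ρ₂ ∈ Ioo c s, F ρ₁ = F ρ₂ → ρ₁ = ρ₂ := by
    intro ρ₁ h1 ρ₂ h2 heq
    rcases lt_trichotomy ρ₁ ρ₂ with h | h | h
    · exact absurd heq (ne_of_lt (hFmono ρ₁ (le_of_lt h1.1) ρ₂ h2.2 h))
    · exact h
    · exact absurd heq.symm (ne_of_lt (hFmono ρ₂ (le_of_lt h2.1) ρ₁ h1.2 h))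
  -- the inverse function rd
  set rd : ℝ → ℝ := fun σ =>
    if h : ∃ ρ, ρ ∈ Ioo c s ∧ F ρ = σ then h.choose else c + 1 with hrddef
  have hrdspec : ∀ σ ∈ Ioo (F c) bd, rd σ ∈ Ioo c s ∧ F (rd σ) = σ := by
    intro σ hσ
    obtain ⟨ρ, hρ, hFρ⟩ := hsurj σ hσ
    have hex : ∃ ρ, ρ ∈ Ioo c s ∧ F ρ = σ := ⟨ρ, hρ, hFρ⟩
    simp only [hrddef, dif_pos hex]
    exact ⟨hex.choose_spec.1, hex.choose_spec.2⟩
  have hrdF : ∀ ρ ∈ Ioo c s, rd (F ρ) = ρ := by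
    intro ρ hρ
    have hσ : F ρ ∈ Ioo (F c) bd := ⟨had_lt ρ hρ, hFlt ρ hρ⟩
    obtain ⟨h1, h2⟩ := hrdspec _ hσ
    exact hFinj _ h1 _ hρ h2
  -- continuity of rd on (F c, bd)
  have hrdcont : ∀ σ ∈ Ioo (F c) bd, ContinuousAt rd σ := by
    intro σ hσ
    obtain ⟨hmem, hFσ⟩ := hrdspec σ hσ
    rw [ContinuousAt]
    apply tendsto_order.2
    constructor
    · intro x hx
      set ρ₁ := max x ((c + rd σ)/2) with hρ₁def
      have hρ₁c : c < ρ₁ := lt_max_of_lt_right (by linarith [hmem.1])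
      have hρ₁lt : ρ₁ < rd σ := max_lt hx (by linarith [hmem.1])
      have hρ₁s : ρ₁ < s := lt_trans hρ₁lt hmem.2
      have hFρ₁ : F ρ₁ < σ := by
        rw [← hFσ]; exact hFmono ρ₁ (le_of_lt hρ₁c) (rd σ) hmem.2 hρ₁lt
      have hnb : Ioo (max (F c) (F ρ₁)) bd ∈ 𝓝 σ :=
        Ioo_mem_nhds (max_lt hσ.1 hFρ₁) hσ.2
      filter_upwards [hnb] with σ' hσ'
      have hσ'mem : σ' ∈ Ioo (F c) bd :=
        ⟨lt_of_le_of_lt (le_max_left _ _) hσ'.1, hσ'.2⟩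
      obtain ⟨hm', hF'⟩ := hrdspec σ' hσ'mem
      by_contra hcon
      push_neg at hcon
      have h1 : rd σ' ≤ ρ₁ := le_trans hcon (le_max_left _ _)
      have h2 : F (rd σ') ≤ F ρ₁ := by
        rcases eq_or_lt_of_le h1 with h | h
        · rw [h]
        · exact le_of_lt (hFmono (rd σ') (le_of_lt hm'.1) ρ₁ hρ₁s h)
      rw [hF'] at h2
      exact absurd h2 (not_le.2 (lt_of_le_of_lt (le_max_right _ _) hσ'.1))
    · intro x hx
      set ρ₂ := min x ((rd σ + s)/2) with hρ₂def
      have hρ₂s : ρ₂ < s := min_lt_of_right_lt (by linarith [hmem.2])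
      have hρ₂gt : rd σ < ρ₂ := lt_min hx (by linarith [hmem.2])
      have hρ₂c : c < ρ₂ := lt_trans hmem.1 hρ₂gt
      have hFρ₂ : σ < F ρ₂ := by
        rw [← hFσ]; exact hFmono (rd σ) (le_of_lt hmem.1) ρ₂ hρ₂s hρ₂gt
      have hnb : Ioo (F c) (min bd (F ρ₂)) ∈ 𝓝 σ :=
        Ioo_mem_nhds hσ.1 (lt_min hσ.2 hFρ₂)
      filter_upwards [hnb] with σ' hσ'
      have hσ'mem : σ' ∈ Ioo (F c) bd :=
        ⟨hσ'.1, lt_of_lt_of_le hσ'.2 (min_le_left _ _)⟩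
      obtain ⟨hm', hF'⟩ := hrdspec σ' hσ'mem
      by_contra hcon
      push_neg at hcon
      have h1 : ρ₂ ≤ rd σ' := le_trans (min_le_left _ _) hcon
      have h2 : F ρ₂ ≤ F (rd σ') := by
        rcases eq_or_lt_of_le h1 with h | h
        · rw [h]
        · exact le_of_lt (hFmono ρ₂ (le_of_lt hρ₂c) (rd σ') hm'.2 h)
      rw [hF'] at h2
      exact absurd h2 (not_le.2 (lt_of_lt_of_le hσ'.2 (min_le_right _ _)))
  -- derivative of rd
  have hrdd : ∀ σ ∈ Ioo (F c) bd,
      HasDerivAt rd (Real.sqrt (Weff M E l (rd σ))) σ := by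
    intro σ hσ
    obtain ⟨hmem, hFσ⟩ := hrdspec σ hσ
    have hWρ : 0 < Weff M E l (rd σ) :=
      hWpos (rd σ) (lt_trans hr0c hmem.1) hmem.2
    have hne : (1 : ℝ) / Real.sqrt (Weff M E l (rd σ)) ≠ 0 :=
      ne_of_gt (hgpos (rd σ) (lt_trans hr0c hmem.1) hmem.2)
    have h1 := HasDerivAt.of_local_left_inverse (hrdcont σ hσ)
      (hFd (rd σ) hmem) hne ?_
    · rw [one_div, inv_inv] at h1; exact h1
    · filter_upwards [Ioo_mem_nhds hσ.1 hσ.2] with σ' hσ'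
      exact (hrdspec σ' hσ').2
  have hFapp : ∀ x, F x = 𝒯 + ∫ y in r0..x, 1 / Real.sqrt (Weff M E l y) :=
    fun x => rfl
  clear_value rd bd F
  -- FTC helper
  have hFTC : ∀ (f : ℝ → ℝ), ContinuousOn f (Ioo r0 s) → IntegrableOn f (Set.Ioc r0 c) →
      ∀ ρ ∈ Ioo c s, HasDerivAt (fun u => ∫ y in r0..u, f y) (f ρ) ρ := by
    intro f hf hfc ρ hρ
    have hρU : ρ ∈ Ioo r0 s := ⟨lt_trans hr0c hρ.1, hρ.2⟩
    exact intervalIntegral.integral_hasDerivAt_right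
      (hII f hf hfc ρ (le_of_lt hρ.1) hρ.2)
      (hf.stronglyMeasurableAtFilter isOpen_Ioo ρ hρU)
      (hf.continuousAt (isOpen_Ioo.mem_nhds hρU))
  refine ⟨F c, bd,
    (fun σ => T + E * ∫ y in r0..rd σ, y / ((y - 2*M) * Real.sqrt (Weff M E l y))),
    (fun σ => E * rd σ / (rd σ - 2*M)),
    rd,
    (fun σ => Real.sqrt (Weff M E l (rd σ))),
    (fun σ => Φ + l * ∫ y in r0..rd σ, 1 / (y^2 * Real.sqrt (Weff M E l y))),
    (fun σ => l / (rd σ)^2),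
    ?_, ?_, ?_, ?_, ?_, ?_, ?_, ?_, ?_⟩
  · -- geodesic equations
    intro σ hσ
    obtain ⟨hmem, hFσ⟩ := hrdspec σ hσ
    have hρr0 : r0 < rd σ := lt_trans hr0c hmem.1
    have hW : 0 < Weff M E l (rd σ) := hWpos (rd σ) hρr0 hmem.2
    have hsq : 0 < Real.sqrt (Weff M E l (rd σ)) := Real.sqrt_pos.2 hW
    have h2M' : 2*M < rd σ := by linarith [hmem.1]
    have h0 : (0:ℝ) < rd σ := by linarith
    have hne0 : rd σ ≠ 0 := ne_of_gt h0
    have hne2M : rd σ - 2*M ≠ 0 := ne_of_gt (by linarith)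
    refine ⟨h2M', ?_, hrdd σ hσ, ?_, ?_, ?_, ?_⟩
    · -- t derivative
      have hG := hFTC _ hgtcont hgtIocc (rd σ) hmem
      have h2 := ((hG.comp σ (hrdd σ hσ)).const_mul E).const_add T
      refine h2.congr_deriv (Eq.symm ?_)
      show E * rd σ / (rd σ - 2*M) = _
      field_simp
    · -- φ derivative
      have hG := hFTC _ hgφcont hgφIocc (rd σ) hmem
      have h2 := ((hG.comp σ (hrdd σ hσ)).const_mul l).const_add Φ
      refine h2.congr_deriv (Eq.symm ?_)
      show l / (rd σ)^2 = _
      field_simp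
    · -- t second derivative
      have hnum : HasDerivAt (fun u : ℝ => E * u) (E * 1) (rd σ) :=
        (hasDerivAt_id (rd σ)).const_mul E
      have hden : HasDerivAt (fun u : ℝ => u - 2*M) 1 (rd σ) :=
        (hasDerivAt_id (rd σ)).sub_const (2*M)
      have hdiv := hnum.div hden hne2M
      have h2 := hdiv.comp σ (hrdd σ hσ)
      refine h2.congr_deriv (Eq.symm ?_)
      field_simp
      ring
    · -- r second derivative
      have ha : HasDerivAt (fun u : ℝ => 2*M/u)
          ((0 * rd σ - 2*M * 1)/(rd σ)^2) (rd σ) :=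
        (hasDerivAt_const (rd σ) (2*M)).div (hasDerivAt_id (rd σ)) hne0
      have h1 := ha.const_sub 1
      have hb : HasDerivAt (fun u : ℝ => l^2/u^2)
          ((0 * (rd σ)^2 - l^2 * (2 * (rd σ)^1))/((rd σ)^2)^2) (rd σ) :=
        (hasDerivAt_const (rd σ) (l^2)).div (hasDerivAt_pow 2 (rd σ))
          (pow_ne_zero 2 hne0)
      have h2 := hb.const_add 1
      have h3 := (h1.mul h2).const_sub (E^2)
      have hWd : HasDerivAt (fun u => Weff M E l u)
          (-((-((0 * rd σ - 2*M * 1)/(rd σ)^2)) * (1 + l^2/(rd σ)^2)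
            + (1 - 2*M/rd σ) * ((0 * (rd σ)^2 - l^2 * (2 * (rd σ)^1))/((rd σ)^2)^2)))
          (rd σ) := h3
      have hWrd := hWd.comp σ (hrdd σ hσ)
      have h6 := (Real.hasDerivAt_sqrt (ne_of_gt hW)).comp σ hWrd
      have hsqn : Real.sqrt (Weff M E l (rd σ)) ≠ 0 := ne_of_gt hsq
      have hv : 1 / (2 * Real.sqrt (Weff M E l (rd σ)))
          * ((-((-((0 * rd σ - 2*M * 1)/(rd σ)^2)) * (1 + l^2/(rd σ)^2)
            + (1 - 2*M/rd σ) * ((0 * (rd σ)^2 - l^2 * (2 * (rd σ)^1))/((rd σ)^2)^2)))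
          * Real.sqrt (Weff M E l (rd σ)))
          = (-((-((0 * rd σ - 2*M * 1)/(rd σ)^2)) * (1 + l^2/(rd σ)^2)
            + (1 - 2*M/rd σ) * ((0 * (rd σ)^2 - l^2 * (2 * (rd σ)^1))/((rd σ)^2)^2)))
            / 2 := by
        field_simp
      refine h6.congr_deriv (Eq.symm ?_)
      rw [Real.sq_sqrt (le_of_lt hW), hv,
        show Weff M E l (rd σ) = E^2 - (1 - 2*M/rd σ)*(1 + l^2/(rd σ)^2) from rfl]
      field_simp
      rw [div_eq_iff (by linarith)]
      ring
    · -- φ second derivative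
      have hdiv : HasDerivAt (fun u : ℝ => l/u^2)
          ((0 * (rd σ)^2 - l * (2 * (rd σ)^1))/((rd σ)^2)^2) (rd σ) :=
        (hasDerivAt_const (rd σ) l).div (hasDerivAt_pow 2 (rd σ))
          (pow_ne_zero 2 hne0)
      have h2 := hdiv.comp σ (hrdd σ hσ)
      refine h2.congr_deriv (Eq.symm ?_)
      field_simp
      ring
  · -- unit norm
    intro σ hσ
    obtain ⟨hmem, hFσ⟩ := hrdspec σ hσ
    have hρr0 : r0 < rd σ := lt_trans hr0c hmem.1
    have hW : 0 < Weff M E l (rd σ) := hWpos (rd σ) hρr0 hmem.2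
    have h2M' : 2*M < rd σ := by linarith [hmem.1]
    have h0 : (0:ℝ) < rd σ := by linarith
    have hne0 : rd σ ≠ 0 := ne_of_gt h0
    have hne2M : rd σ - 2*M ≠ 0 := ne_of_gt (by linarith)
    rw [Real.sq_sqrt (le_of_lt hW),
      show Weff M E l (rd σ) = E^2 - (1 - 2*M/rd σ)*(1 + l^2/(rd σ)^2) from rfl]
    field_simp
    ring
  · -- energy
    intro σ hσ
    obtain ⟨hmem, hFσ⟩ := hrdspec σ hσ
    have h2M' : 2*M < rd σ := by linarith [hmem.1]
    have hne0 : rd σ ≠ 0 := ne_of_gt (by linarith)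
    have hne2M : rd σ - 2*M ≠ 0 := ne_of_gt (by linarith)
    field_simp
  · -- angular momentum
    intro σ hσ
    obtain ⟨hmem, hFσ⟩ := hrdspec σ hσ
    have hne0 : rd σ ≠ 0 := ne_of_gt (by linarith [hmem.1])
    field_simp
  · -- positive radial velocity
    intro σ hσ
    obtain ⟨hmem, hFσ⟩ := hrdspec σ hσ
    exact Real.sqrt_pos.2 (hWpos (rd σ) (lt_trans hr0c hmem.1) hmem.2)
  · -- image
    ext x
    constructor
    · rintro ⟨σ, hσ, rfl⟩
      exact (hrdspec σ hσ).1
    · intro hx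
      exact ⟨F x, ⟨had_lt x hx, hFlt x hx⟩, hrdF x hx⟩
  · -- LRL angle
    intro σ hσ
    ring
  · -- LRL time
    intro σ hσ
    ring
  · -- LRL proper time
    intro σ hσ
    have h := (hrdspec σ hσ).2
    rw [hFapp] at h
    linarith


/-- The finite symmetry transformation generated by the LRL angle (turning-point case): there is a unit-norm equatorial geodesic with energy `E`, angular momentum `L - ε`, the same radial range, and the same LRL quantities `Φ`, `T`, `𝒯` relative to its own turning-point base radius `r₀†`. -/
theorem LRL_angle_finite_symmetry (M a b : ℝ) (hM : 0 < M) (hab : a < b)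
    (t t' r r' φ φ' : ℝ → ℝ) (E L r₀ r₀d Φ T 𝒯 ε : ℝ)
    (hgeo : SchwGeo M (Set.Ioo a b) t t' r r' φ φ')
    (hnorm : ∀ τ ∈ Set.Ioo a b,
      -((r τ - 2 * M) / r τ) * (t' τ) ^ 2 + (r τ / (r τ - 2 * M)) * (r' τ) ^ 2
        + (r τ) ^ 2 * (φ' τ) ^ 2 = -1)
    (hE : ∀ τ ∈ Set.Ioo a b, (1 - 2 * M / r τ) * t' τ = E)
    (hL : ∀ τ ∈ Set.Ioo a b, (r τ) ^ 2 * φ' τ = L)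
    (hr' : ∀ τ ∈ Set.Ioo a b, 0 < r' τ)
    -- the turning-point base radius r₀ of the original solution
    (hr₀ : r₀ ∈ Set.Ioo (2 * M) (sInf (r '' Set.Ioo a b)))
    (hWr₀ : Weff M E L r₀ = 0)
    (hWpos : ∀ y : ℝ, r₀ < y → (∃ x ∈ r '' Set.Ioo a b, y < x) →
      0 < Weff M E L y)
    (hint : MeasureTheory.IntegrableOn (fun y => 1 / Real.sqrt (Weff M E L y))
      (Set.Ioc r₀ (sInf (r '' Set.Ioo a b))))
    -- the turning-point base radius r₀† of the transformed solution
    (hr₀d : r₀d ∈ Set.Ioo (2 * M) (sInf (r '' Set.Ioo a b)))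
    (hWr₀d : Weff M (E) (L - ε) r₀d = 0)
    (hWposd : ∀ y : ℝ, r₀d < y → (∃ x ∈ r '' Set.Ioo a b, y < x) →
      0 < Weff M (E) (L - ε) y)
    (hintd : MeasureTheory.IntegrableOn
      (fun y => 1 / Real.sqrt (Weff M (E) (L - ε) y))
      (Set.Ioc r₀d (sInf (r '' Set.Ioo a b))))
    -- the constant LRL quantities of the original solution
    (hΦ : ∀ τ ∈ Set.Ioo a b,
      φ τ - L * ∫ y in r₀..r τ, 1 / (y ^ 2 * Real.sqrt (Weff M E L y)) = Φ)
    (hT : ∀ τ ∈ Set.Ioo a b,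
      t τ - E * ∫ y in r₀..r τ, y / ((y - 2 * M) * Real.sqrt (Weff M E L y)) = T)
    (h𝒯 : ∀ τ ∈ Set.Ioo a b,
      τ - ∫ y in r₀..r τ, 1 / Real.sqrt (Weff M E L y) = 𝒯) :
    ∃ (ad bd : ℝ) (td td' rd rd' φd φd' : ℝ → ℝ),
      SchwGeo M (Set.Ioo ad bd) td td' rd rd' φd φd' ∧
      (∀ τ ∈ Set.Ioo ad bd,
        -((rd τ - 2 * M) / rd τ) * (td' τ) ^ 2
          + (rd τ / (rd τ - 2 * M)) * (rd' τ) ^ 2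
          + (rd τ) ^ 2 * (φd' τ) ^ 2 = -1) ∧
      (∀ τ ∈ Set.Ioo ad bd, (1 - 2 * M / rd τ) * td' τ = E) ∧
      (∀ τ ∈ Set.Ioo ad bd, (rd τ) ^ 2 * φd' τ = L - ε) ∧
      (∀ τ ∈ Set.Ioo ad bd, 0 < rd' τ) ∧
      rd '' Set.Ioo ad bd = r '' Set.Ioo a b ∧
      (∀ τ ∈ Set.Ioo ad bd,
        φd τ - (L - ε) * ∫ y in r₀d..rd τ,
          1 / (y ^ 2 * Real.sqrt (Weff M (E) (L - ε) y)) = Φ) ∧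
      (∀ τ ∈ Set.Ioo ad bd,
        td τ - (E) * ∫ y in r₀d..rd τ,
          y / ((y - 2 * M) * Real.sqrt (Weff M (E) (L - ε) y)) = T) ∧
      (∀ τ ∈ Set.Ioo ad bd,
        τ - ∫ y in r₀d..rd τ, 1 / Real.sqrt (Weff M (E) (L - ε) y) = 𝒯) := by
  have hτ₀ : (a+b)/2 ∈ Set.Ioo a b := ⟨by linarith, by linarith⟩
  have hJne : (r '' Set.Ioo a b).Nonempty := ⟨_, Set.mem_image_of_mem r hτ₀⟩
  have hmem : ∀ τ ∈ Set.Ioo a b, 2 * M < r τ := fun τ hτ => (hgeo τ hτ).1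
  have hrderiv : ∀ τ ∈ Set.Ioo a b, HasDerivAt r (r' τ) τ :=
    fun τ hτ => (hgeo τ hτ).2.2.1
  have hJbb : BddBelow (r '' Set.Ioo a b) := by
    refine ⟨2*M, ?_⟩
    rintro x ⟨τ, hτ, rfl⟩
    exact le_of_lt (hmem τ hτ)
  -- radial energy relation and speed bound
  have hkey : ∀ τ ∈ Set.Ioo a b, (r' τ)^2 = Weff M E L (r τ) := by
    intro τ hτ
    have hrτ := hmem τ hτ
    have hr0 : 0 < r τ := by linarith
    have hne : r τ ≠ 0 := ne_of_gt hr0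
    have hne2 : r τ - 2*M ≠ 0 := ne_of_gt (by linarith)
    have hE' := hE τ hτ
    have hL' := hL τ hτ
    have hN := hnorm τ hτ
    have ht' : t' τ = E * r τ / (r τ - 2*M) := by
      rw [eq_div_iff hne2, ← hE']; field_simp
    have hφ' : φ' τ = L / (r τ)^2 := by
      rw [eq_div_iff (pow_ne_zero 2 hne), ← hL']; ring
    rw [ht', hφ'] at hN
    have h2 : (r' τ)^2 = ((r τ - 2*M)/(r τ)) * ((r τ/(r τ - 2*M)) * (r' τ)^2) := by
      field_simp
    have h3 : (r τ/(r τ - 2*M)) * (r' τ)^2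
        = -1 + ((r τ - 2*M)/r τ)*(E*r τ/(r τ - 2*M))^2
          - (r τ)^2*(L/(r τ)^2)^2 := by linarith
    rw [h2, h3]
    unfold Weff
    field_simp
    ring
  have hWle : ∀ τ ∈ Set.Ioo a b, r' τ ≤ |E| := by
    intro τ hτ
    have h1 := hkey τ hτ
    have hrτ := hmem τ hτ
    have hr0 : 0 < r τ := by linarith
    have h2 : Weff M E L (r τ) ≤ E^2 := by
      unfold Weff
      have hA : 0 < 1 - 2*M/(r τ) := by
        rw [sub_pos, div_lt_one hr0]; linarith
      have hB : 0 < 1 + L^2/(r τ)^2 := by positivity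
      nlinarith
    nlinarith [hr' τ hτ, abs_nonneg E, sq_abs E]
  have hcont : ContinuousOn r (Set.Ioo a b) :=
    fun τ hτ => ((hrderiv τ hτ).continuousAt).continuousWithinAt
  have hmono : StrictMonoOn r (Set.Ioo a b) := by
    apply strictMonoOn_of_deriv_pos (convex_Ioo a b) hcont
    intro x hx
    rw [interior_Ioo] at hx
    rw [(hrderiv x hx).deriv]
    exact hr' x hx
  have hJba : BddAbove (r '' Set.Ioo a b) := by
    refine ⟨|r ((a+b)/2)| + |E| * (b - a), ?_⟩
    rintro x ⟨τ, hτ, rfl⟩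
    have hb1 : ‖r τ - r ((a+b)/2)‖ ≤ |E| * ‖τ - (a+b)/2‖ := by
      refine Convex.norm_image_sub_le_of_norm_hasDerivWithin_le
        (f' := r') (fun x hx => (hrderiv x hx).hasDerivWithinAt)
        (fun x hx => ?_) (convex_Ioo a b) hτ₀ hτ
      rw [Real.norm_eq_abs, abs_of_pos (hr' x hx)]
      exact hWle x hx
    rw [Real.norm_eq_abs, Real.norm_eq_abs] at hb1
    have h2 : |τ - (a+b)/2| ≤ b - a := by
      rw [abs_le]; obtain ⟨h3, h4⟩ := hτ; constructor <;> linarith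
    have h3 : |E| * |τ - (a+b)/2| ≤ |E| * (b - a) :=
      mul_le_mul_of_nonneg_left h2 (abs_nonneg E)
    have h4 : r τ - r ((a+b)/2) ≤ |r τ - r ((a+b)/2)| := le_abs_self _
    have h5 : r ((a+b)/2) ≤ |r ((a+b)/2)| := le_abs_self _
    linarith
  have hclt : ∀ τ ∈ Set.Ioo a b, sInf (r '' Set.Ioo a b) < r τ := by
    intro τ hτ
    obtain ⟨h1, h2⟩ := hτ
    have hτ' : (a+τ)/2 ∈ Set.Ioo a b := ⟨by linarith, by linarith⟩
    have h3 : sInf (r '' Set.Ioo a b) ≤ r ((a+τ)/2) :=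
      csInf_le hJbb (Set.mem_image_of_mem r hτ')
    have h4 : r ((a+τ)/2) < r τ := hmono hτ' ⟨h1, h2⟩ (by linarith)
    linarith
  have hslt : ∀ τ ∈ Set.Ioo a b, r τ < sSup (r '' Set.Ioo a b) := by
    intro τ hτ
    obtain ⟨h1, h2⟩ := hτ
    have hτ' : (τ+b)/2 ∈ Set.Ioo a b := ⟨by linarith, by linarith⟩
    have h3 : r ((τ+b)/2) ≤ sSup (r '' Set.Ioo a b) :=
      le_csSup hJba (Set.mem_image_of_mem r hτ')
    have h4 : r τ < r ((τ+b)/2) := hmono ⟨h1, h2⟩ hτ' (by linarith)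
    linarith
  have hcs : sInf (r '' Set.Ioo a b) < sSup (r '' Set.Ioo a b) :=
    lt_trans (hclt _ hτ₀) (hslt _ hτ₀)
  have hJeq : r '' Set.Ioo a b
      = Set.Ioo (sInf (r '' Set.Ioo a b)) (sSup (r '' Set.Ioo a b)) := by
    apply Set.Subset.antisymm
    · rintro x ⟨τ, hτ, rfl⟩
      exact ⟨hclt τ hτ, hslt τ hτ⟩
    · intro x hx
      obtain ⟨j, hj, hjx⟩ := exists_lt_of_csInf_lt hJne hx.1
      obtain ⟨j', hj', hxj'⟩ := exists_lt_of_lt_csSup hJne hx.2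
      have hOC : (r '' Set.Ioo a b).OrdConnected :=
        ((isPreconnected_Ioo).image r hcont).ordConnected
      exact hOC.out hj hj' ⟨le_of_lt hjx, le_of_lt hxj'⟩
  have hWd0 : ∀ y, r₀d < y → y < sSup (r '' Set.Ioo a b) →
      0 < Weff M E (L - ε) y := by
    intro y h1 h2
    exact hWposd y h1 (exists_lt_of_lt_csSup hJne h2)
  obtain ⟨ad, bd, td, td', rd, rd', φd, φd', h1, h2, h3, h4, h5, h6, h7, h8, h9⟩ :=
    construct_geodesic (Φ := Φ) (T := T) (𝒯 := 𝒯) hM hr₀d.1 hr₀d.2 hcs hWr₀d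
      hWd0 hintd
  refine ⟨ad, bd, td, td', rd, rd', φd, φd', h1, h2, h3, h4, h5, ?_, h7, h8, h9⟩
  rw [hJeq]
  exact h6
end
end

section
/- Let M > 0 and let (t, r, φ) be a twice-differentiable unit-norm solution of the equatorial geodesic equations of Schwarzschild spacetime on an open real interval I with r(τ) > 2M, constant energy E, constant angular momentum L, and r'(τ) > 0 on I; set J = r(I) and s = sup J. Let ε ∈ ℝ, set W(y) = E² − (1 − 2M/y)(1 + L²/y²) and W†(y) = (E + ε)² − (1 − 2M/y)(1 + L²/y²). Assume: r₀ ∈ (2M, inf J) with W(r₀) = 0, W > 0 on (r₀, s), and y ↦ 1/√W(y) is integrable on (r₀, inf J]; and r₀† ∈ (2M, inf J) with W†(r₀†) = 0, W† > 0 on (r₀†, s), and y ↦ 1/√W†(y) is integrable on (r₀†, inf J]. Let Φ, T, 𝒯 be the constant LRL quantities of (t, r, φ) with base radius r₀. Then there exists a twice-differentiable unit-norm solution (t†, r†, φ†) of the equatorial geodesic equations on an open interval I†, with energy E + ε, angular momentum L, (r†)' > 0 on I†, and r†(I†) = J, whose LRL angle, LRL time, and LRL proper-time with base radius r₀† are the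 constants Φ† = Φ, T† = T, and 𝒯† = 𝒯. -/
noncomputable section

section Aux
open Set MeasureTheory intervalIntegral

lemma Weff_eq_P (M E L y : ℝ) (hy : y ≠ 0) :
    Weff M E L y = ((E^2-1)*y^3 + 2*M*y^2 - L^2*y + 2*M*L^2) / y^3 := by
  unfold Weff; field_simp; ring

set_option maxHeartbeats 1000000 in
lemma exists_linear_lb (M E L u v w : ℝ) (hM : 0 < M) (hu : 2*M < u)
    (huv : u < v) (hvw : v < w) (hWu : Weff M E L u = 0)
    (hpos : ∀ y, u < y → y < w → 0 < Weff M E L y) :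
    ∃ κ > 0, ∀ y ∈ Set.Ico v w, κ * (w - y) ≤ Weff M E L y := by
  have hu0 : (0:ℝ) < u := lt_trans (by positivity) hu
  have hv0 : (0:ℝ) < v := hu0.trans huv
  have hw0 : (0:ℝ) < w := hv0.trans hvw
  set c : ℝ := E^2 - 1 with hc
  set P : ℝ → ℝ := fun y => c*y^3 + 2*M*y^2 - L^2*y + 2*M*L^2 with hP
  have hWP : ∀ y : ℝ, 0 < y → Weff M E L y = P y / y^3 := fun y hy =>
    Weff_eq_P M E L y hy.ne'
  have hPcont : Continuous P := by fun_prop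
  have hPu : P u = 0 := by
    have := hWu; rw [hWP u hu0] at this
    have h3 : u^3 ≠ 0 := by positivity
    field_simp at this; linarith [this]
  have hPpos : ∀ y, u < y → y < w → 0 < P y := by
    intro y h1 h2
    have hy0 : (0:ℝ) < y := hu0.trans h1
    have := hpos y h1 h2
    rw [hWP y hy0] at this
    have h3 : (0:ℝ) < y^3 := by positivity
    have h4 := mul_pos this h3
    rwa [div_mul_cancel₀ _ (by positivity : y^3 ≠ 0)] at h4
  have hPw : 0 ≤ P w := by
    have htend : Filter.Tendsto P (nhdsWithin w (Set.Iio w)) (nhds (P w)) :=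
      (hPcont.tendsto w).mono_left nhdsWithin_le_nhds
    refine ge_of_tendsto htend ?_
    filter_upwards [Ioo_mem_nhdsLT_of_mem (Set.mem_Ioc.mpr ⟨huv.trans hvw, le_refl w⟩)]
      with y hy
    exact (hPpos y hy.1 hy.2).le
  rcases eq_or_lt_of_le hPw with hPw0 | hPw0
  · -- double-root analysis: P w = 0
    set s : ℝ := -c with hs
    set q : ℝ := s*(u+w) - 2*M with hq
    set p₁ : ℝ := (-L^2) - (q*(u+w) - s*u*w) with hp1def
    set p₀ : ℝ := 2*M*L^2 + u*w*q with hp0def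
    have hfact0 : ∀ y, P y = (y-u)*(w-y)*(s*y+q) + (p₁*y + p₀) := by
      intro y; simp only [hP, hs, hq, hp1def, hp0def]; ring
    have e1 : p₁ * u + p₀ = 0 := by
      have h := hfact0 u; rw [hPu] at h; linear_combination -h
    have e2 : p₁ * w + p₀ = 0 := by
      have h := hfact0 w; rw [← hPw0] at h; linear_combination -h
    have hp1 : p₁ = 0 := by
      have h3 : p₁ * (u - w) = 0 := by linear_combination e1 - e2
      rcases mul_eq_zero.mp h3 with h | h
      · exact h
      · exact absurd h (by intro hh; linarith [huv.trans hvw])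
    have hp0 : p₀ = 0 := by rw [hp1] at e1; linarith
    have hfact : ∀ y, P y = (y-u)*(w-y)*(s*y+q) := by
      intro y; rw [hfact0 y, hp1, hp0]; ring
    have hR : ∀ y, u < y → y < w → 0 < s*y+q := by
      intro y h1 h2
      have hp := hPpos y h1 h2
      rw [hfact y] at hp
      by_contra hR0
      push_neg at hR0
      have hf : 0 < (y-u)*(w-y) := mul_pos (by linarith) (by linarith)
      nlinarith [mul_nonpos_of_nonneg_of_nonpos hf.le hR0]
    have hRw0 : 0 ≤ s*w+q := by
      have htend : Filter.Tendsto (fun y => s*y+q) (nhdsWithin w (Set.Iio w))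
          (nhds (s*w+q)) :=
        ((by fun_prop : Continuous (fun y : ℝ => s*y+q)).tendsto w).mono_left
          nhdsWithin_le_nhds
      refine ge_of_tendsto htend ?_
      filter_upwards [Ioo_mem_nhdsLT_of_mem
        (Set.mem_Ioc.mpr ⟨huv.trans hvw, le_refl w⟩)] with y hy
      exact (hR y hy.1 hy.2).le
    have hRw : 0 < s*w+q := by
      rcases lt_or_eq_of_le hRw0 with h | h
      · exact h
      · -- s*w+q = 0 : contradiction via P 0
        exfalso
        have hsneg : s < 0 := by
          have := hR ((u+w)/2) (by linarith) (by linarith)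
          nlinarith
        have hP0 := hfact 0
        simp only [hP] at hP0
        nlinarith
    have hRv : 0 < s*v+q := hR v huv hvw
    set m : ℝ := min (s*v+q) (s*w+q) with hm
    have hmpos : 0 < m := lt_min hRv hRw
    have haff : ∀ y, v ≤ y → y ≤ w → m ≤ s*y+q := by
      intro y h1 h2
      rcases le_or_gt 0 s with hs0 | hs0
      · calc m ≤ s*v+q := min_le_left _ _
          _ ≤ s*y+q := by nlinarith
      · calc m ≤ s*w+q := min_le_right _ _
          _ ≤ s*y+q := by nlinarith
    have hvu : (0:ℝ) < v - u := sub_pos.mpr huv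
    have hw3 : (0:ℝ) < w^3 := by positivity
    refine ⟨(v-u)*m/w^3, div_pos (mul_pos hvu hmpos) hw3, ?_⟩
    intro y hy
    obtain ⟨hy1, hy2⟩ := hy
    have hy0 : (0:ℝ) < y := hv0.trans_le hy1
    have hy3 : (0:ℝ) < y^3 := by positivity
    rw [hWP y hy0, le_div_iff₀ hy3, hfact y, div_mul_eq_mul_div,
      div_mul_eq_mul_div, div_le_iff₀ hw3]
    have hy3w : y^3 ≤ w^3 := pow_le_pow_left₀ hy0.le (by linarith) 3
    have hmy := haff y hy1 hy2.le
    have h1 : (v-u)*m ≤ (y-u)*(s*y+q) := by nlinarith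
    have hd : 0 ≤ w - y := by linarith
    have h0 : 0 ≤ (v-u)*m*(w-y) := mul_nonneg (mul_nonneg hvu.le hmpos.le) hd
    have hB : (v-u)*m*(w-y) ≤ (y-u)*(s*y+q)*(w-y) :=
      mul_le_mul_of_nonneg_right h1 hd
    nlinarith [mul_le_mul_of_nonneg_right hy3w h0,
      mul_le_mul_of_nonneg_right hB hw3.le]
  · -- P w > 0 : W bounded below on compact
    have hWcont : ContinuousOn (Weff M E L) (Set.Icc v w) := by
      have hcont2 : ContinuousOn (fun y : ℝ => P y / y^3) (Set.Icc v w) :=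
        hPcont.continuousOn.div (by fun_prop)
          (fun y hy => by have : (0:ℝ) < y := hv0.trans_le hy.1; positivity)
      exact hcont2.congr (fun y hy => hWP y (hv0.trans_le hy.1))
    obtain ⟨y₀, hy₀mem, hy₀min⟩ :=
      isCompact_Icc.exists_isMinOn (Set.nonempty_Icc.mpr hvw.le) hWcont
    have hmpos : 0 < Weff M E L y₀ := by
      rcases lt_or_eq_of_le hy₀mem.2 with h | h
      · exact hpos y₀ (huv.trans_le hy₀mem.1) h
      · rw [h, hWP w hw0]; positivity
    have hwv : (0:ℝ) < w - v := sub_pos.mpr hvw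
    have hκ : 0 < Weff M E L y₀ / (w - v) := div_pos hmpos hwv
    refine ⟨Weff M E L y₀ / (w - v), hκ, ?_⟩
    intro y hy
    calc Weff M E L y₀ / (w-v) * (w - y) ≤ Weff M E L y₀ / (w-v) * (w-v) :=
          mul_le_mul_of_nonneg_left (by linarith [hy.1]) hκ.le
      _ = Weff M E L y₀ := div_mul_cancel₀ _ hwv.ne'
      _ ≤ Weff M E L y := hy₀min (Set.mem_Icc.mpr ⟨hy.1, hy.2.le⟩)

lemma continuousOn_Weff (M E L : ℝ) (s : Set ℝ) (hs : ∀ y ∈ s, (0:ℝ) < y) :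
    ContinuousOn (Weff M E L) s := by
  apply continuousOn_const.sub
  apply ContinuousOn.mul
  · exact continuousOn_const.sub (continuousOn_const.div continuousOn_id
      (fun y hy => (hs y hy).ne'))
  · exact continuousOn_const.add (continuousOn_const.div (continuousOn_pow 2)
      (fun y hy => by have := hs y hy; positivity))

lemma continuousOn_inv_sqrt_Weff (M E L : ℝ) (s : Set ℝ)
    (hs : ∀ y ∈ s, (0:ℝ) < y) (hpos : ∀ y ∈ s, 0 < Weff M E L y) :
    ContinuousOn (fun y => 1 / Real.sqrt (Weff M E L y)) s := by
  apply continuousOn_const.div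
  · exact Real.continuous_sqrt.comp_continuousOn (continuousOn_Weff M E L s hs)
  · intro y hy
    exact (Real.sqrt_pos.mpr (hpos y hy)).ne'

lemma integrableOn_one_div_sqrt_W (M E L u v w : ℝ) (hM : 0 < M) (hu : 2*M < u)
    (huv : u < v) (hvw : v < w) (hWu : Weff M E L u = 0)
    (hpos : ∀ y, u < y → y < w → 0 < Weff M E L y)
    (hlow : MeasureTheory.IntegrableOn (fun y => 1 / Real.sqrt (Weff M E L y))
      (Set.Ioc u v)) :
    MeasureTheory.IntegrableOn (fun y => 1 / Real.sqrt (Weff M E L y))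
      (Set.Ioc u w) := by
  have hu0 : (0:ℝ) < u := lt_trans (by positivity) hu
  have hv0 : (0:ℝ) < v := hu0.trans huv
  rw [← Set.Ioc_union_Ioc_eq_Ioc huv.le hvw.le]
  refine hlow.union ?_
  rw [integrableOn_Ioc_iff_integrableOn_Ioo]
  obtain ⟨κ, hκ, hlb⟩ := exists_linear_lb M E L u v w hM hu huv hvw hWu hpos
  have hg : IntegrableOn (fun y => (Real.sqrt κ)⁻¹ * (Real.sqrt (w - y))⁻¹)
      (Set.Ioo v w) := by
    have h1 : IntervalIntegrable (fun x : ℝ => x ^ (-(1/2) : ℝ)) volume 0 (w-v) :=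
      intervalIntegrable_rpow' (by norm_num)
    have h2 := (h1.comp_sub_left w).const_mul ((Real.sqrt κ)⁻¹)
    simp only [sub_zero, sub_sub_cancel] at h2
    have h3 : IntervalIntegrable
        (fun x => (Real.sqrt κ)⁻¹ * (w - x) ^ (-(1/2) : ℝ)) volume v w := h2.symm
    have h4 : IntegrableOn (fun x => (Real.sqrt κ)⁻¹ * (w - x) ^ (-(1/2) : ℝ))
        (Set.Ioo v w) := by
      rw [← integrableOn_Ioc_iff_integrableOn_Ioo]
      rwa [intervalIntegrable_iff_integrableOn_Ioc_of_le hvw.le] at h3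
    refine h4.congr_fun (fun y hy => ?_) measurableSet_Ioo
    have hwy : (0:ℝ) < w - y := sub_pos.mpr hy.2
    beta_reduce
    rw [Real.rpow_neg hwy.le, ← Real.sqrt_eq_rpow]
  refine Integrable.mono' hg ?_ ?_
  · exact (continuousOn_inv_sqrt_Weff M E L (Set.Ioo v w)
      (fun y hy => hv0.trans hy.1)
      (fun y hy => hpos y (huv.trans hy.1) hy.2)).aestronglyMeasurable
      measurableSet_Ioo
  · rw [ae_restrict_iff' measurableSet_Ioo]
    refine Filter.Eventually.of_forall (fun y hy => ?_)
    have hwy : (0:ℝ) < w - y := sub_pos.mpr hy.2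
    have hWy : 0 < Weff M E L y := hpos y (huv.trans hy.1) hy.2
    have hlb' : κ * (w - y) ≤ Weff M E L y := hlb y ⟨hy.1.le, hy.2⟩
    have hsq : Real.sqrt κ * Real.sqrt (w-y) ≤ Real.sqrt (Weff M E L y) := by
      rw [← Real.sqrt_mul hκ.le]
      exact Real.sqrt_le_sqrt hlb'
    have hsp : 0 < Real.sqrt κ * Real.sqrt (w-y) := by positivity
    rw [Real.norm_eq_abs, abs_of_nonneg (by positivity)]
    calc 1 / Real.sqrt (Weff M E L y) ≤ 1 / (Real.sqrt κ * Real.sqrt (w-y)) :=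
          one_div_le_one_div_of_le hsp hsq
      _ = (Real.sqrt κ)⁻¹ * (Real.sqrt (w - y))⁻¹ := by
          rw [one_div, mul_inv]

lemma integrableOn_dominated (u v w C : ℝ) (f h : ℝ → ℝ) (huv : u < v) (hvw : v < w)
    (hf : IntegrableOn f (Set.Ioc u v))
    (hcont : ContinuousOn h (Set.Ioo u w))
    (hbd : ∀ y ∈ Set.Ioc u v, |h y| ≤ C * f y) :
    ∀ ρ, v ≤ ρ → ρ < w → IntegrableOn h (Set.Ioc u ρ) := by
  intro ρ hρ1 hρ2
  have h1 : IntegrableOn h (Set.Ioc u v) := by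
    refine Integrable.mono' (hf.const_mul C) ?_ ?_
    · exact (hcont.mono (fun y hy => ⟨hy.1, lt_of_le_of_lt hy.2 (hρ1.trans_lt hρ2)⟩)).aestronglyMeasurable
        measurableSet_Ioc
    · rw [ae_restrict_iff' measurableSet_Ioc]
      exact Filter.Eventually.of_forall (fun y hy => by
        rw [Real.norm_eq_abs]; exact hbd y hy)
  have h2 : IntegrableOn h (Set.Icc v ρ) := by
    refine ContinuousOn.integrableOn_Icc (hcont.mono ?_)
    intro y hy
    exact ⟨huv.trans_le hy.1, lt_of_le_of_lt hy.2 hρ2⟩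
  exact (h1.union h2).mono_set (fun y hy => by
    rcases le_or_gt y v with h | h
    · exact Or.inl ⟨hy.1, h⟩
    · exact Or.inr ⟨h.le, hy.2⟩)

lemma hasDerivAt_Weff (M E L y : ℝ) (hy : y ≠ 0) :
    HasDerivAt (Weff M E L) ((2*L^2*y - 2*M*y^2 - 6*M*L^2) / y^4) y := by
  have h := (hasDerivAt_const y (E^2)).sub
    (((hasDerivAt_const y (1:ℝ)).sub
        ((hasDerivAt_const y (2*M)).div (hasDerivAt_id y) hy)).mul
      ((hasDerivAt_const y (1:ℝ)).add
        ((hasDerivAt_const y (L^2)).div (hasDerivAt_pow 2 y) (pow_ne_zero 2 hy))))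
  refine h.congr_deriv ?_
  simp only [Pi.sub_apply, Pi.add_apply, Pi.div_apply, id]
  field_simp
  ring


end Aux

open Set MeasureTheory intervalIntegral in
set_option maxHeartbeats 2000000 in
/-- The finite symmetry transformation generated by the LRL time (turning-point case): there is a unit-norm equatorial geodesic with energy `E + ε`, angular momentum `L`, the same radial range, and the same LRL quantities `Φ`, `T`, `𝒯` relative to its own turning-point base radius `r₀†`. -/
theorem LRL_time_finite_symmetry (M a b : ℝ) (hM : 0 < M) (hab : a < b)
    (t t' r r' φ φ' : ℝ → ℝ) (E L r₀ r₀d Φ T 𝒯 ε : ℝ)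
    (hgeo : SchwGeo M (Set.Ioo a b) t t' r r' φ φ')
    (hnorm : ∀ τ ∈ Set.Ioo a b,
      -((r τ - 2 * M) / r τ) * (t' τ) ^ 2 + (r τ / (r τ - 2 * M)) * (r' τ) ^ 2
        + (r τ) ^ 2 * (φ' τ) ^ 2 = -1)
    (hE : ∀ τ ∈ Set.Ioo a b, (1 - 2 * M / r τ) * t' τ = E)
    (hL : ∀ τ ∈ Set.Ioo a b, (r τ) ^ 2 * φ' τ = L)
    (hr' : ∀ τ ∈ Set.Ioo a b, 0 < r' τ)
    -- the turning-point base radius r₀ of the original solution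
    (hr₀ : r₀ ∈ Set.Ioo (2 * M) (sInf (r '' Set.Ioo a b)))
    (hWr₀ : Weff M E L r₀ = 0)
    (hWpos : ∀ y : ℝ, r₀ < y → (∃ x ∈ r '' Set.Ioo a b, y < x) →
      0 < Weff M E L y)
    (hint : MeasureTheory.IntegrableOn (fun y => 1 / Real.sqrt (Weff M E L y))
      (Set.Ioc r₀ (sInf (r '' Set.Ioo a b))))
    -- the turning-point base radius r₀† of the transformed solution
    (hr₀d : r₀d ∈ Set.Ioo (2 * M) (sInf (r '' Set.Ioo a b)))
    (hWr₀d : Weff M (E + ε) (L) r₀d = 0)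
    (hWposd : ∀ y : ℝ, r₀d < y → (∃ x ∈ r '' Set.Ioo a b, y < x) →
      0 < Weff M (E + ε) (L) y)
    (hintd : MeasureTheory.IntegrableOn
      (fun y => 1 / Real.sqrt (Weff M (E + ε) (L) y))
      (Set.Ioc r₀d (sInf (r '' Set.Ioo a b))))
    -- the constant LRL quantities of the original solution
    (hΦ : ∀ τ ∈ Set.Ioo a b,
      φ τ - L * ∫ y in r₀..r τ, 1 / (y ^ 2 * Real.sqrt (Weff M E L y)) = Φ)
    (hT : ∀ τ ∈ Set.Ioo a b,
      t τ - E * ∫ y in r₀..r τ, y / ((y - 2 * M) * Real.sqrt (Weff M E L y)) = T)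
    (h𝒯 : ∀ τ ∈ Set.Ioo a b,
      τ - ∫ y in r₀..r τ, 1 / Real.sqrt (Weff M E L y) = 𝒯) :
    ∃ (ad bd : ℝ) (td td' rd rd' φd φd' : ℝ → ℝ),
      SchwGeo M (Set.Ioo ad bd) td td' rd rd' φd φd' ∧
      (∀ τ ∈ Set.Ioo ad bd,
        -((rd τ - 2 * M) / rd τ) * (td' τ) ^ 2
          + (rd τ / (rd τ - 2 * M)) * (rd' τ) ^ 2
          + (rd τ) ^ 2 * (φd' τ) ^ 2 = -1) ∧
      (∀ τ ∈ Set.Ioo ad bd, (1 - 2 * M / rd τ) * td' τ = E + ε) ∧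
      (∀ τ ∈ Set.Ioo ad bd, (rd τ) ^ 2 * φd' τ = L) ∧
      (∀ τ ∈ Set.Ioo ad bd, 0 < rd' τ) ∧
      rd '' Set.Ioo ad bd = r '' Set.Ioo a b ∧
      (∀ τ ∈ Set.Ioo ad bd,
        φd τ - (L) * ∫ y in r₀d..rd τ,
          1 / (y ^ 2 * Real.sqrt (Weff M (E + ε) (L) y)) = Φ) ∧
      (∀ τ ∈ Set.Ioo ad bd,
        td τ - (E + ε) * ∫ y in r₀d..rd τ,
          y / ((y - 2 * M) * Real.sqrt (Weff M (E + ε) (L) y)) = T) ∧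
      (∀ τ ∈ Set.Ioo ad bd,
        τ - ∫ y in r₀d..rd τ, 1 / Real.sqrt (Weff M (E + ε) (L) y) = 𝒯) := by
    classical
  have hJbelow : ∀ x ∈ r '' Set.Ioo a b, 2*M < x := by
    rintro x ⟨τ, hτ, rfl⟩; exact (hgeo τ hτ).1
  have hrd : ∀ τ ∈ Set.Ioo a b, HasDerivAt r (r' τ) τ := fun τ hτ => (hgeo τ hτ).2.2.1
  have hrcont : ContinuousOn r (Set.Ioo a b) :=
    fun τ hτ => ((hrd τ hτ).continuousAt).continuousWithinAt
  -- squared radial velocity identity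
  have hr2 : ∀ τ ∈ Set.Ioo a b, (r' τ)^2 = Weff M E L (r τ) := by
    intro τ hτ
    have h2M := (hgeo τ hτ).1
    have hy0 : r τ ≠ 0 := by nlinarith
    have hym : r τ - 2*M ≠ 0 := by nlinarith
    have hn := hnorm τ hτ
    have hEt := hE τ hτ
    have hLt := hL τ hτ
    simp only [Weff]
    rw [← hEt, ← hLt]
    field_simp
    field_simp at hn
    have key : (r' τ)^2 * (r τ)^2 = ((r τ) - 2*M)^2*(t' τ)^2
        - (r τ)^3*((r τ)-2*M)*(φ' τ)^2 - (r τ)*((r τ)-2*M) := by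
      linear_combination hn
    linear_combination key
  -- strict monotonicity of r
  have hrmono : StrictMonoOn r (Set.Ioo a b) := by
    apply strictMonoOn_of_deriv_pos (convex_Ioo a b) hrcont
    intro x hx
    rw [interior_Ioo] at hx
    rw [(hrd x hx).deriv]
    exact hr' x hx
  -- r' is bounded by |E|
  have hr'bd : ∀ τ ∈ Set.Ioo a b, ‖r' τ‖ ≤ |E| := by
    intro τ hτ
    have h2M := (hgeo τ hτ).1
    have h0 : (0:ℝ) < r τ := by nlinarith
    have hW : (r' τ)^2 ≤ E^2 := by
      rw [hr2 τ hτ]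
      have h1 : 0 ≤ (1 - 2*M/(r τ)) := by
        rw [sub_nonneg, div_le_one h0]; linarith
      have h2 : 0 ≤ 1 + L^2/(r τ)^2 := by positivity
      simp only [Weff]
      nlinarith
    rw [Real.norm_eq_abs, ← Real.sqrt_sq_eq_abs, ← Real.sqrt_sq_eq_abs]
    exact Real.sqrt_le_sqrt hW
  -- the radial range J is a bounded open interval
  have hmid : (a+b)/2 ∈ Set.Ioo a b := ⟨by linarith, by linarith⟩
  have hrbd : ∀ τ ∈ Set.Ioo a b, |r τ - r ((a+b)/2)| ≤ |E| * (b - a) := by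
    intro τ hτ
    have := Convex.norm_image_sub_le_of_norm_hasDerivWithin_le
      (f := r) (f' := r') (s := Set.Ioo a b)
      (fun x hx => (hrd x hx).hasDerivWithinAt) hr'bd (convex_Ioo a b) hmid hτ
    rw [Real.norm_eq_abs, Real.norm_eq_abs] at this
    refine this.trans ?_
    have h1 : |τ - (a+b)/2| ≤ b - a := by
      rw [abs_le]; constructor <;> [linarith [hτ.1, hτ.2]; linarith [hτ.1, hτ.2]]
    exact mul_le_mul_of_nonneg_left h1 (abs_nonneg E)
  have hJne : (r '' Set.Ioo a b).Nonempty := ⟨r ((a+b)/2), Set.mem_image_of_mem r hmid⟩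
  have hJbddAbove : BddAbove (r '' Set.Ioo a b) := by
    refine ⟨r ((a+b)/2) + |E| * (b-a), ?_⟩
    rintro x ⟨τ, hτ, rfl⟩
    have := hrbd τ hτ
    rw [abs_le] at this
    linarith [this.2]
  have hJbddBelow : BddBelow (r '' Set.Ioo a b) :=
    ⟨2*M, fun x hx => (hJbelow x hx).le⟩
  set rA := sInf (r '' Set.Ioo a b) with hrA
  set rB := sSup (r '' Set.Ioo a b) with hrB
  have hp1 : (a + (a+b)/2)/2 ∈ Set.Ioo a b := ⟨by linarith, by linarith⟩
  have hp2 : ((a+b)/2 + b)/2 ∈ Set.Ioo a b := ⟨by linarith, by linarith⟩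
  have hrArB : rA < rB := by
    have h1 : rA ≤ r ((a + (a+b)/2)/2) := csInf_le hJbddBelow (Set.mem_image_of_mem r hp1)
    have h2 : r (((a+b)/2 + b)/2) ≤ rB := le_csSup hJbddAbove (Set.mem_image_of_mem r hp2)
    have h3 : r ((a + (a+b)/2)/2) < r (((a+b)/2 + b)/2) :=
      hrmono hp1 hp2 (by linarith)
    linarith
  have hJeq : r '' Set.Ioo a b = Set.Ioo rA rB := by
    apply Set.Subset.antisymm
    · rintro x ⟨τ, hτ, rfl⟩
      constructor
      · have hmem : (a+τ)/2 ∈ Set.Ioo a b := ⟨by linarith [hτ.1], by linarith [hτ.1, hτ.2]⟩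
        have h1 : rA ≤ r ((a+τ)/2) := csInf_le hJbddBelow (Set.mem_image_of_mem r hmem)
        have h2 : r ((a+τ)/2) < r τ := hrmono hmem hτ (by linarith [hτ.1])
        linarith
      · have hmem : (τ+b)/2 ∈ Set.Ioo a b := ⟨by linarith [hτ.1, hτ.2], by linarith [hτ.2]⟩
        have h1 : r ((τ+b)/2) ≤ rB := le_csSup hJbddAbove (Set.mem_image_of_mem r hmem)
        have h2 : r τ < r ((τ+b)/2) := hrmono hτ hmem (by linarith [hτ.2])
        linarith
    · intro x hx
      obtain ⟨p, hp, hpx⟩ := exists_lt_of_csInf_lt hJne hx.1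
      obtain ⟨q, hq, hxq⟩ := exists_lt_of_lt_csSup hJne hx.2
      have hord : (r '' Set.Ioo a b).OrdConnected :=
        ((isPreconnected_Ioo).image r hrcont).ordConnected
      exact hord.out hp hq ⟨hpx.le, hxq.le⟩
  -- dagger construction setup
  obtain ⟨hu2M, hurA⟩ := hr₀d
  have hu0 : (0:ℝ) < r₀d := by nlinarith
  have h2MrA : 2*M < rA := lt_trans hu2M hurA
  have hWdpos : ∀ y, r₀d < y → y < rB → 0 < Weff M (E+ε) L y := by
    intro y h1 h2
    exact hWposd y h1 (exists_lt_of_lt_csSup hJne h2)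
  have hintd' : IntegrableOn (fun y => 1 / Real.sqrt (Weff M (E+ε) L y))
      (Set.Ioc r₀d rB) :=
    integrableOn_one_div_sqrt_W M (E+ε) L r₀d rA rB hM hu2M hurA hrArB hWr₀d
      hWdpos hintd
  have hfpos : ∀ y ∈ Set.Ioo r₀d rB, 0 < 1 / Real.sqrt (Weff M (E+ε) L y) := by
    intro y hy
    have := hWdpos y hy.1 hy.2
    positivity
  have hfcont : ContinuousOn (fun y => 1 / Real.sqrt (Weff M (E+ε) L y))
      (Set.Ioo r₀d rB) :=
    continuousOn_inv_sqrt_Weff M (E+ε) L _ (fun y hy => hu0.trans hy.1)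
      (fun y hy => hWdpos y hy.1 hy.2)
  have hII : ∀ ρ₁ ρ₂, r₀d ≤ ρ₁ → ρ₁ ≤ ρ₂ → ρ₂ ≤ rB →
      IntervalIntegrable (fun y => 1 / Real.sqrt (Weff M (E+ε) L y)) volume ρ₁ ρ₂ := by
    intro ρ₁ ρ₂ h1 h2 h3
    rw [intervalIntegrable_iff_integrableOn_Ioc_of_le h2]
    exact hintd'.mono_set (fun y hy => ⟨lt_of_le_of_lt h1 hy.1, hy.2.trans h3⟩)
  set F : ℝ → ℝ := fun ρ => 𝒯 + ∫ y in r₀d..ρ, 1 / Real.sqrt (Weff M (E+ε) L y)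
    with hF
  have hFlt : ∀ ρ₁ ρ₂, r₀d ≤ ρ₁ → ρ₁ < ρ₂ → ρ₂ ≤ rB → F ρ₁ < F ρ₂ := by
    intro ρ₁ ρ₂ h1 h2 h3
    have hsplit : (∫ y in r₀d..ρ₁, 1 / Real.sqrt (Weff M (E+ε) L y))
        + (∫ y in ρ₁..ρ₂, 1 / Real.sqrt (Weff M (E+ε) L y))
        = ∫ y in r₀d..ρ₂, 1 / Real.sqrt (Weff M (E+ε) L y) :=
      intervalIntegral.integral_add_adjacent_intervals
        (hII r₀d ρ₁ le_rfl h1 (by linarith)) (hII ρ₁ ρ₂ h1 h2.le h3)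
    have hpos : 0 < ∫ y in ρ₁..ρ₂, 1 / Real.sqrt (Weff M (E+ε) L y) := by
      apply intervalIntegral.intervalIntegral_pos_of_pos_on
        (hII ρ₁ ρ₂ h1 h2.le h3)
      · intro x hx
        exact hfpos x ⟨lt_of_le_of_lt h1 hx.1, lt_of_lt_of_le hx.2 h3⟩
      · exact h2
    simp only [hF]
    linarith [hsplit]
  have hFcont : ContinuousOn F (Set.Icc r₀d rB) := by
    apply continuousOn_const.add
    have := intervalIntegral.continuousOn_primitive_interval
      (a := r₀d) (b := rB)
      (f := fun y => 1 / Real.sqrt (Weff M (E+ε) L y)) (μ := volume) ?_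
    · rwa [Set.uIcc_of_le (by linarith : r₀d ≤ rB)] at this
    · rw [Set.uIcc_of_le (by linarith : r₀d ≤ rB),
        integrableOn_Icc_iff_integrableOn_Ioc]
      exact hintd'
  have hFderiv : ∀ ρ ∈ Set.Ioo r₀d rB,
      HasDerivAt F (1 / Real.sqrt (Weff M (E+ε) L ρ)) ρ := by
    intro ρ hρ
    apply HasDerivAt.const_add
    apply intervalIntegral.integral_hasDerivAt_right
      (hII r₀d ρ le_rfl hρ.1.le hρ.2.le)
      (ContinuousOn.stronglyMeasurableAtFilter isOpen_Ioo hfcont ρ hρ)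
      (hfcont.continuousAt (isOpen_Ioo.mem_nhds hρ))
  set ad := F rA with had
  set bd := F rB with hbd
  have hadbd : ad < bd := hFlt rA rB hurA.le hrArB le_rfl
  have hFmem : ∀ ρ ∈ Set.Ioo rA rB, F ρ ∈ Set.Ioo ad bd := by
    intro ρ hρ
    exact ⟨hFlt rA ρ hurA.le hρ.1 hρ.2.le, hFlt ρ rB (hurA.le.trans hρ.1.le) hρ.2 le_rfl⟩
  have hsurj : ∀ τ ∈ Set.Ioo ad bd, ∃ ρ ∈ Set.Ioo rA rB, F ρ = τ := by
    intro τ hτ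
    have hsub : Set.Icc ad bd ⊆ F '' Set.Icc rA rB :=
      intermediate_value_Icc hrArB.le
        (hFcont.mono (Set.Icc_subset_Icc hurA.le le_rfl))
    obtain ⟨ρ, hρ, hFρ⟩ := hsub ⟨hτ.1.le, hτ.2.le⟩
    refine ⟨ρ, ⟨?_, ?_⟩, hFρ⟩
    · rcases lt_or_eq_of_le hρ.1 with h | h
      · exact h
      · exfalso
        have : ad = τ := by rw [had, h]; exact hFρ
        linarith [hτ.1]
    · rcases lt_or_eq_of_le hρ.2 with h | h
      · exact h
      · exfalso
        have : bd = τ := by rw [hbd, ← h]; exact hFρ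
        linarith [hτ.2]
  set rd : ℝ → ℝ := Function.invFunOn F (Set.Ioo rA rB) with hrdf
  have hrdmem : ∀ τ ∈ Set.Ioo ad bd, rd τ ∈ Set.Ioo rA rB :=
    fun τ hτ => Function.invFunOn_mem (hsurj τ hτ)
  have hFrd : ∀ τ ∈ Set.Ioo ad bd, F (rd τ) = τ :=
    fun τ hτ => Function.invFunOn_eq (hsurj τ hτ)
  have hFsm : StrictMonoOn F (Set.Ioo rA rB) :=
    fun x hx y hy hxy => hFlt x y (hurA.le.trans hx.1.le) hxy hy.2.le
  have hrdF : ∀ ρ ∈ Set.Ioo rA rB, rd (F ρ) = ρ :=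
    fun ρ hρ => hFsm.injOn.leftInvOn_invFunOn hρ
  have himage : rd '' Set.Ioo ad bd = Set.Ioo rA rB := by
    apply Set.Subset.antisymm
    · rintro x ⟨τ, hτ, rfl⟩; exact hrdmem τ hτ
    · intro ρ hρ
      exact ⟨F ρ, hFmem ρ hρ, hrdF ρ hρ⟩
  have hrdsm : StrictMonoOn rd (Set.Ioo ad bd) := by
    intro τ₁ h₁ τ₂ h₂ hlt
    by_contra hle
    push_neg at hle
    rcases lt_or_eq_of_le hle with h | h
    · have := hFsm (hrdmem τ₂ h₂) (hrdmem τ₁ h₁) h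
      rw [hFrd τ₁ h₁, hFrd τ₂ h₂] at this
      linarith
    · have : F (rd τ₂) = F (rd τ₁) := by rw [h]
      rw [hFrd τ₁ h₁, hFrd τ₂ h₂] at this
      linarith
  have hrdcont : ∀ τ ∈ Set.Ioo ad bd, ContinuousAt rd τ := by
    intro τ hτ
    apply StrictMonoOn.continuousAt_of_image_mem_nhds hrdsm
      (isOpen_Ioo.mem_nhds hτ)
    rw [himage]
    exact isOpen_Ioo.mem_nhds (hrdmem τ hτ)
  have hrdDeriv : ∀ τ ∈ Set.Ioo ad bd,
      HasDerivAt rd (Real.sqrt (Weff M (E+ε) L (rd τ))) τ := by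
    intro τ hτ
    have hρ := hrdmem τ hτ
    have hWρ : 0 < Weff M (E+ε) L (rd τ) := hWdpos _ (hurA.trans hρ.1) hρ.2
    have hne : 1 / Real.sqrt (Weff M (E+ε) L (rd τ)) ≠ 0 := by positivity
    have h := HasDerivAt.of_local_left_inverse (hrdcont τ hτ)
      (hFderiv (rd τ) ⟨hurA.trans hρ.1, hρ.2⟩) hne
      (Filter.eventually_of_mem (isOpen_Ioo.mem_nhds hτ) (fun x hx => hFrd x hx))
    rwa [one_div, inv_inv] at h
  -- derivative of primitives
  have hprim : ∀ (h : ℝ → ℝ), ContinuousOn h (Set.Ioo r₀d rB) →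
      (∀ ρ', rA ≤ ρ' → ρ' < rB → IntegrableOn h (Set.Ioc r₀d ρ')) →
      ∀ ρ ∈ Set.Ioo rA rB, HasDerivAt (fun x => ∫ y in r₀d..x, h y) (h ρ) ρ := by
    intro h hcont hintg ρ hρ
    have hmem : ρ ∈ Set.Ioo r₀d rB := ⟨hurA.trans hρ.1, hρ.2⟩
    apply intervalIntegral.integral_hasDerivAt_right
    · rw [intervalIntegrable_iff_integrableOn_Ioc_of_le (hurA.le.trans hρ.1.le)]
      exact hintg ρ hρ.1.le hρ.2
    · exact ContinuousOn.stronglyMeasurableAtFilter isOpen_Ioo hcont ρ hmem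
    · exact hcont.continuousAt (isOpen_Ioo.mem_nhds hmem)
  set Ed := E + ε with hEd
  have hsqpos : ∀ y, r₀d < y → y < rB → 0 < Real.sqrt (Weff M Ed L y) :=
    fun y h1 h2 => Real.sqrt_pos.mpr (hWdpos y h1 h2)
  -- t-integrand
  have hgtcont : ContinuousOn (fun y => y / ((y - 2*M) * Real.sqrt (Weff M Ed L y)))
      (Set.Ioo r₀d rB) := by
    apply ContinuousOn.div continuousOn_id
    · exact (continuousOn_id.sub continuousOn_const).mul
        (Real.continuous_sqrt.comp_continuousOn
          (continuousOn_Weff M Ed L _ (fun y hy => hu0.trans hy.1)))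
    · intro y hy
      have h1 : 0 < y - 2*M := by have := hu2M.trans hy.1; linarith
      have h2 := hsqpos y hy.1 hy.2
      positivity
  have hgtint : ∀ ρ', rA ≤ ρ' → ρ' < rB →
      IntegrableOn (fun y => y / ((y - 2*M) * Real.sqrt (Weff M Ed L y)))
        (Set.Ioc r₀d ρ') := by
    apply integrableOn_dominated r₀d rA rB (rA/(r₀d - 2*M)) _ _ hurA hrArB hintd
      hgtcont
    intro y hy
    have hy2M : 2*M < y := hu2M.trans hy.1
    have hyrB : y < rB := lt_of_le_of_lt hy.2 hrArB
    have hs := hsqpos y hy.1 hyrB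
    have h1 : 0 < y - 2*M := by linarith
    have h2 : 0 < r₀d - 2*M := by linarith
    have hy0' : (0:ℝ) < y := hu0.trans hy.1
    rw [abs_of_nonneg (div_nonneg hy0'.le (mul_nonneg h1.le hs.le)),
      div_mul_eq_div_div, mul_one_div]
    rw [div_le_div_iff₀ hs hs]
    apply mul_le_mul_of_nonneg_right ?_ hs.le
    rw [div_le_div_iff₀ h1 h2]
    have e1 : r₀d*(rA - r₀d) ≤ y*(rA - r₀d) :=
      mul_le_mul_of_nonneg_right hy.1.le (by linarith)
    have e2 : 2*M*(rA - y) ≤ 2*M*(rA - r₀d) :=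
      mul_le_mul_of_nonneg_left (by linarith [hy.1]) (by linarith)
    have e3 : 2*M*(rA - r₀d) ≤ r₀d*(rA - r₀d) :=
      mul_le_mul_of_nonneg_right hu2M.le (by linarith)
    nlinarith [e1, e2, e3]
  -- φ-integrand
  have hgpcont : ContinuousOn (fun y => 1 / (y^2 * Real.sqrt (Weff M Ed L y)))
      (Set.Ioo r₀d rB) := by
    apply ContinuousOn.div continuousOn_const
    · exact (continuousOn_pow 2).mul
        (Real.continuous_sqrt.comp_continuousOn
          (continuousOn_Weff M Ed L _ (fun y hy => hu0.trans hy.1)))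
    · intro y hy
      have h0 : 0 < y := hu0.trans hy.1
      have h2 := hsqpos y hy.1 hy.2
      positivity
  have hgpint : ∀ ρ', rA ≤ ρ' → ρ' < rB →
      IntegrableOn (fun y => 1 / (y^2 * Real.sqrt (Weff M Ed L y)))
        (Set.Ioc r₀d ρ') := by
    apply integrableOn_dominated r₀d rA rB (1/r₀d^2) _ _ hurA hrArB hintd
      hgpcont
    intro y hy
    have hyrB : y < rB := lt_of_le_of_lt hy.2 hrArB
    have hs := hsqpos y hy.1 hyrB
    have hy0' : (0:ℝ) < y := hu0.trans hy.1
    rw [abs_of_nonneg (one_div_nonneg.mpr (mul_nonneg (by positivity) hs.le)),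
      div_mul_eq_div_div, mul_one_div]
    rw [div_le_div_iff₀ hs hs]
    apply mul_le_mul_of_nonneg_right ?_ hs.le
    apply one_div_le_one_div_of_le (by positivity)
    exact pow_le_pow_left₀ hu0.le hy.1.le 2
  -- the transformed solution
  set rd'f : ℝ → ℝ := fun τ => Real.sqrt (Weff M Ed L (rd τ)) with hrd'f
  set td'f : ℝ → ℝ := fun τ => Ed * rd τ / (rd τ - 2*M) with htd'f
  set φd'f : ℝ → ℝ := fun τ => L / (rd τ)^2 with hφd'f
  set tdf : ℝ → ℝ := fun τ => T + Ed * ∫ y in r₀d..rd τ,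
    y / ((y - 2*M) * Real.sqrt (Weff M Ed L y)) with htdf
  set φdf : ℝ → ℝ := fun τ => Φ + L * ∫ y in r₀d..rd τ,
    1 / (y^2 * Real.sqrt (Weff M Ed L y)) with hφdf
  refine ⟨ad, bd, tdf, td'f, rd, rd'f, φdf, φd'f, ?_, ?_, ?_, ?_, ?_, ?_, ?_, ?_, ?_⟩
  · -- geodesic equations
    intro τ hτ
    have hρ := hrdmem τ hτ
    have hρ2M : 2*M < rd τ := h2MrA.trans hρ.1
    have hρ0 : (0:ℝ) < rd τ := by linarith
    have hρm : rd τ - 2*M ≠ 0 := ne_of_gt (by linarith)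
    have hWρ : 0 < Weff M Ed L (rd τ) := hWdpos _ (hurA.trans hρ.1) hρ.2
    have hsρ : 0 < Real.sqrt (Weff M Ed L (rd τ)) := Real.sqrt_pos.mpr hWρ
    have hD := hrdDeriv τ hτ
    refine ⟨hρ2M, ?_, hD, ?_, ?_, ?_, ?_⟩
    · -- t first derivative
      have hprimT := hprim _ hgtcont hgtint (rd τ) hρ
      have heq : td'f τ = Ed * ((rd τ) / ((rd τ - 2*M) *
          Real.sqrt (Weff M Ed L (rd τ))) * Real.sqrt (Weff M Ed L (rd τ))) := by
        simp only [htd'f]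
        field_simp
      rw [heq]
      exact ((hprimT.comp τ hD).const_mul Ed).const_add T
    · -- φ first derivative
      have hprimP := hprim _ hgpcont hgpint (rd τ) hρ
      have heq : φd'f τ = L * (1 / ((rd τ)^2 *
          Real.sqrt (Weff M Ed L (rd τ))) * Real.sqrt (Weff M Ed L (rd τ))) := by
        simp only [hφd'f]
        field_simp
      rw [heq]
      exact ((hprimP.comp τ hD).const_mul L).const_add Φ
    · -- t second derivative
      have ha := hD.const_mul Ed
      have hb := hD.sub_const (2*M)
      have h := ha.div hb hρm
      have heq : -(2 * M / (rd τ * (rd τ - 2 * M))) * td'f τ * rd'f τ =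
          (Ed * Real.sqrt (Weff M Ed L (rd τ)) * (rd τ - 2*M) -
            Ed * rd τ * Real.sqrt (Weff M Ed L (rd τ))) / (rd τ - 2*M)^2 := by
        simp only [htd'f, hrd'f]
        field_simp
        ring
      rw [heq]
      exact h
    · -- r second derivative
      have hWAt := hasDerivAt_Weff M Ed L (rd τ) hρ0.ne'
      have hcomp := hWAt.comp τ hD
      have hsq := (Real.hasDerivAt_sqrt hWρ.ne').comp τ hcomp
      have heq : -(M * (rd τ - 2 * M) / (rd τ)^3) * (td'f τ)^2
          + (M / (rd τ * (rd τ - 2*M))) * (rd'f τ)^2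
          + (rd τ - 2*M) * (φd'f τ)^2 =
          1 / (2 * Real.sqrt (Weff M Ed L (rd τ))) *
            ((2*L^2*(rd τ) - 2*M*(rd τ)^2 - 6*M*L^2) / (rd τ)^4 *
              Real.sqrt (Weff M Ed L (rd τ))) := by
        simp only [htd'f, hrd'f, hφd'f]
        set sq := Real.sqrt (Weff M Ed L (rd τ)) with hsqdef
        have hs2 : sq^2 = Weff M Ed L (rd τ) := Real.sq_sqrt hWρ.le
        rw [hs2]
        rw [show Weff M Ed L (rd τ) = Ed^2 - (1 - 2*M/(rd τ))*(1 + L^2/(rd τ)^2)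
          from rfl]
        have hρm2 : rd τ - M * 2 ≠ 0 := by contrapose! hρm; linarith
        field_simp
        ring
      rw [heq]
      exact hsq
    · -- φ second derivative
      have hpow := hD.pow 2
      have h := (hasDerivAt_const τ L).div hpow (pow_pos hρ0 2).ne'
      have heq : -(2 / rd τ) * rd'f τ * φd'f τ =
          (0 * (rd τ)^2 - L * (((2:ℕ):ℝ) * rd τ ^ (2-1) *
            Real.sqrt (Weff M Ed L (rd τ)))) / ((rd τ)^2)^2 := by
        simp only [hrd'f, hφd'f]
        push_cast
        field_simp
        ring
      rw [heq]
      exact h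
  · -- unit norm
    intro τ hτ
    have hρ := hrdmem τ hτ
    have hρ2M : 2*M < rd τ := h2MrA.trans hρ.1
    have hρ0 : (0:ℝ) < rd τ := by linarith
    have hρm : rd τ - 2*M ≠ 0 := ne_of_gt (by linarith)
    have hWρ : 0 < Weff M Ed L (rd τ) := hWdpos _ (hurA.trans hρ.1) hρ.2
    simp only [htd'f, hrd'f, hφd'f]
    rw [Real.sq_sqrt hWρ.le]
    simp only [Weff]
    field_simp
    ring
  · -- energy
    intro τ hτ
    have hρ := hrdmem τ hτ
    have hρ2M : 2*M < rd τ := h2MrA.trans hρ.1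
    have hρ0 : (0:ℝ) < rd τ := by linarith
    have hρm : rd τ - 2*M ≠ 0 := ne_of_gt (by linarith)
    simp only [htd'f]
    field_simp
  · -- angular momentum
    intro τ hτ
    have hρ := hrdmem τ hτ
    have hρ0 : (0:ℝ) < rd τ := by linarith [h2MrA.trans hρ.1]
    simp only [hφd'f]
    field_simp
  · -- positive radial velocity
    intro τ hτ
    have hρ := hrdmem τ hτ
    exact hsqpos _ (hurA.trans hρ.1) hρ.2
  · -- same radial range
    exact himage.trans hJeq.symm
  · -- LRL angle
    intro τ hτ
    simp only [hφdf]
    ring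
  · -- LRL time
    intro τ hτ
    simp only [htdf]
    ring
  · -- LRL proper time
    intro τ hτ
    have h := hFrd τ hτ
    simp only [hF] at h
    linarith
end
end
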